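/- arXiv:1005.4151 — 11 statements merged into one kernel-verified Lean document; each statement's English description precedes it below -/
import Mathlib

section
/- Let n be a positive integer and let P be a subset of [[n]] = {(i,j) : 1 ≤ i < j ≤ n} that is a poset (i.e., (i,j),(j,k) ∈ P implies (i,k) ∈ P). Then the pattern group U_P = {g ∈ U_n : g_{ij} = 0 whenever i < j and (i,j) ∉ P} is a normal subgroup of U_n if and only if P satisfies: for all 1 ≤ i ≤ j < k ≤ l ≤ n, (i,l) ∉ P implies (j,k) ∉ P. -/
open scoped Classical

abbrev Mat (n : ℕ) (F : Type*) := Matrix (Fin n) (Fin n) F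

/-- The set of positions strictly above the diagonal. -/
def PosUpper (n : ℕ) : Set (Fin n × Fin n) := {p | p.1 < p.2}

/-- A poset on `[n]`: a set of strictly-upper positions closed under composition. -/
def IsPoset {n : ℕ} (P : Set (Fin n × Fin n)) : Prop :=
  P ⊆ PosUpper n ∧ ∀ i j k : Fin n, (i, j) ∈ P → (j, k) ∈ P → (i, k) ∈ P

/-- The normality condition for a pattern poset. -/
def NormalPoset {n : ℕ} (P : Set (Fin n × Fin n)) : Prop :=
  ∀ i j k l : Fin n, i ≤ j → j < k → k ≤ l → (i, l) ∉ P → (j, k) ∉ P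

/-- The pattern group `U_P` (as a set of matrices). -/
def UPg {n : ℕ} {F : Type*} [Field F] (P : Set (Fin n × Fin n)) : Set (Mat n F) :=
  {g | (∀ i, g i i = 1) ∧ ∀ i j : Fin n, i ≠ j → (i, j) ∉ P → g i j = 0}

/-- The algebra `n_P` of strictly upper triangular matrices supported on `P`. -/
def nPa {n : ℕ} {F : Type*} [Field F] (P : Set (Fin n × Fin n)) : Set (Mat n F) :=
  {X | ∀ i j : Fin n, (i, j) ∉ P → X i j = 0}

/-- The support of a matrix. -/
def msupp {n : ℕ} {F : Type*} [Field F] (X : Mat n F) : Set (Fin n × Fin n) :=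
  {p | X p.1 p.2 ≠ 0}

/-- `F_q`-labeled set partitions: matrices in `n_P` with at most one nonzero entry
in each row and each column. -/
def SPa {n : ℕ} {F : Type*} [Field F] (P : Set (Fin n × Fin n)) : Set (Mat n F) :=
  {X | X ∈ nPa P ∧ (∀ i j j' : Fin n, X i j ≠ 0 → X i j' ≠ 0 → j = j') ∧
       (∀ i i' j : Fin n, X i j ≠ 0 → X i' j ≠ 0 → i = i')}

/-!
Write `U_n` for `UPg (PosUpper n)`. If `P` is normal, the space `n_P` of matrices supported
on `P` is stable under multiplication on either side by upper triangular matrices, because a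
product entry `(i, l)` only collects entries `(m, l)` of `X` with `i ≤ m` (or `(i, m)` with
`m ≤ l`). Since `g u g⁻¹ - 1 = g (u - 1) g⁻¹` and `g⁻¹` is again upper triangular, `U_P` is
normal. Conversely, conjugating the transvection `1 + E_{jk}` by `1 + E_{ij}` puts `1` at
position `(i, k)`, and conjugating `1 + E_{ik}` by `1 + E_{kl}` puts `-1` at `(i, l)`; so if
`U_P` is normal, `(j, k) ∈ P` forces `(i, l) ∈ P` whenever `i ≤ j` and `k ≤ l`.
-/

section

open Matrix

section Transvection

variable {ι R : Type*} [Fintype ι] [DecidableEq ι] [CommRing R]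

lemma inv_transvection_of_ne {i j : ι} (hij : i ≠ j) (c : R) :
    (transvection i j c)⁻¹ = transvection i j (-c) :=
  inv_eq_right_inv (by rw [transvection_mul_transvection_same _ _ hij, add_neg_cancel,
    transvection_zero])

lemma transvection_conj_transvection_apply_left {i j k : ι} (hij : i ≠ j) (hjk : j ≠ k)
    (hik : i ≠ k) (c d : R) :
    (transvection i j c * transvection j k d * transvection i j (-c)) i k = c * d := by
  rw [mul_transvection_apply_of_ne _ _ _ _ hjk.symm, transvection_mul_apply_same]
  simp [transvection, one_apply_ne hik, one_apply_ne hjk,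
    single_apply_of_ne _ _ _ _ _ fun h => hij h.1.symm]

lemma transvection_conj_transvection_apply_right {i k l : ι} (hik : i ≠ k) (hkl : k ≠ l)
    (hil : i ≠ l) (c d : R) :
    (transvection k l c * transvection i k d * transvection k l (-c)) i l = -(c * d) := by
  rw [mul_transvection_apply_same, transvection_mul_apply_of_ne _ _ _ _ hik,
    transvection_mul_apply_of_ne _ _ _ _ hik]
  simp [transvection, one_apply_ne hil, one_apply_ne hik,
    single_apply_of_ne _ _ _ _ _ fun h => hkl h.2]

end Transvection

variable {n : ℕ} {F : Type*} [Field F] {P : Set (Fin n × Fin n)}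

lemma transvection_mem_UPg {i j : Fin n} (hij : i ≠ j) (h : (i, j) ∈ P) (c : F) :
    transvection i j c ∈ UPg P := by
  refine ⟨fun a => ?_, fun a b hab habP => ?_⟩
  · simp [transvection, single_apply_of_ne _ _ _ _ _ fun h' => hij (h'.1.trans h'.2.symm)]
  · have hne : ¬(i = a ∧ j = b) := by rintro ⟨rfl, rfl⟩; exact habP h
    simp [transvection, one_apply_ne hab, single_apply_of_ne _ _ _ _ _ hne]

lemma mem_UPg_iff_sub_one_mem_nPa (hP : P ⊆ PosUpper n) {g : Mat n F} :
    g ∈ UPg P ↔ g - 1 ∈ nPa P := by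
  have hdiag : ∀ i, (i, i) ∉ P := fun i hi => lt_irrefl i (hP hi)
  constructor
  · rintro ⟨hg₁, hg₂⟩ i j hij
    rcases eq_or_ne i j with rfl | hne
    · simp [hg₁]
    · simp [hg₂ i j hne hij, one_apply_ne hne]
  · intro hg
    refine ⟨fun i => ?_, fun i j hne hij => ?_⟩
    · simpa [sub_eq_zero] using hg i i (hdiag i)
    · simpa [one_apply_ne hne, sub_eq_zero] using hg i j hij

lemma isUpperTriangular_of_mem_UPg_posUpper {g : Mat n F} (hg : g ∈ UPg (PosUpper n)) :
    g.IsUpperTriangular :=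
  fun i j hji => hg.2 i j hji.ne' (not_lt_of_gt hji)

section Normal

variable (hP : P ⊆ PosUpper n) (hN : NormalPoset P)
include hP hN

lemma mul_mem_nPa_left {A X : Mat n F} (hA : A.IsUpperTriangular) (hX : X ∈ nPa P) :
    A * X ∈ nPa P := by
  intro i l hil
  rw [mul_apply]
  refine Finset.sum_eq_zero fun m _ => ?_
  rcases lt_or_ge m i with hmi | him
  · rw [hA hmi, zero_mul]
  · by_cases hml : (m, l) ∈ P
    · exact absurd hml (hN i m l l him (hP hml) le_rfl hil)
    · rw [hX m l hml, mul_zero]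

lemma mul_mem_nPa_right {A X : Mat n F} (hA : A.IsUpperTriangular) (hX : X ∈ nPa P) :
    X * A ∈ nPa P := by
  intro i l hil
  rw [mul_apply]
  refine Finset.sum_eq_zero fun m _ => ?_
  rcases lt_or_ge l m with hlm | hml
  · rw [hA hlm, mul_zero]
  · by_cases him : (i, m) ∈ P
    · exact absurd him (hN i i m l le_rfl (hP him) hml hil)
    · rw [hX i m him, zero_mul]

lemma conj_mem_UPg_of_normalPoset {g u : Mat n F} (hg : g ∈ UPg (PosUpper n))
    (hu : u ∈ UPg P) : g * u * g⁻¹ ∈ UPg P := by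
  have hg_tri := isUpperTriangular_of_mem_UPg_posUpper hg
  have hdet : g.det = 1 := by
    rw [det_of_isUpperTriangular hg_tri]
    exact Finset.prod_eq_one fun i _ => hg.1 i
  have : Invertible g := invertibleOfIsUnitDet g (by simp [hdet])
  have hconj : g * u * g⁻¹ - 1 = g * (u - 1) * g⁻¹ := by
    rw [mul_sub, sub_mul, mul_one, mul_inv_of_invertible]
  rw [mem_UPg_iff_sub_one_mem_nPa hP, hconj]
  refine mul_mem_nPa_right hP hN (blockTriangular_inv_of_blockTriangular hg_tri) ?_
  exact mul_mem_nPa_left hP hN hg_tri ((mem_UPg_iff_sub_one_mem_nPa hP).1 hu)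

end Normal

section Converse

variable (hc : ∀ g ∈ UPg (F := F) (PosUpper n), ∀ u ∈ UPg (F := F) P, g * u * g⁻¹ ∈ UPg P)
  (hP : P ⊆ PosUpper n)
include hc hP

lemma mem_of_conj_mem_of_lt_left {i j k : Fin n} (hij : i < j) (hjk : (j, k) ∈ P) :
    (i, k) ∈ P := by
  have hjk' : j < k := hP hjk
  by_contra hik
  have hmem := hc _ (transvection_mem_UPg hij.ne hij (1 : F)) _
    (transvection_mem_UPg hjk'.ne hjk (1 : F))
  rw [inv_transvection_of_ne hij.ne] at hmem
  have hentry := hmem.2 i k (hij.trans hjk').ne hik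
  rw [transvection_conj_transvection_apply_left hij.ne hjk'.ne (hij.trans hjk').ne] at hentry
  simp at hentry

lemma mem_of_conj_mem_of_lt_right {i k l : Fin n} (hkl : k < l) (hik : (i, k) ∈ P) :
    (i, l) ∈ P := by
  have hik' : i < k := hP hik
  by_contra hil
  have hmem := hc _ (transvection_mem_UPg hkl.ne hkl (1 : F)) _
    (transvection_mem_UPg hik'.ne hik (1 : F))
  rw [inv_transvection_of_ne hkl.ne] at hmem
  have hentry := hmem.2 i l (hik'.trans hkl).ne hil
  rw [transvection_conj_transvection_apply_right hik'.ne hkl.ne (hik'.trans hkl).ne] at hentry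
  simp at hentry

lemma normalPoset_of_conj_mem : NormalPoset P := by
  intro i j k l hij _ hkl hil hjk
  have hik : (i, k) ∈ P := by
    rcases hij.eq_or_lt with rfl | hij
    · exact hjk
    · exact mem_of_conj_mem_of_lt_left hc hP hij hjk
  rcases hkl.eq_or_lt with rfl | hkl
  · exact hil hik
  · exact hil (mem_of_conj_mem_of_lt_right hc hP hkl hik)

end Converse

end

/-- For a poset `P ⊆ [[n]]`, the pattern group `U_P` is a normal
subgroup of `U_n` iff `P` satisfies the normality condition. -/
theorem pattern_group_normal_iff {n : ℕ} {F : Type*} [Field F]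
    (P : Set (Fin n × Fin n)) (hP : IsPoset P) :
    (∀ g ∈ UPg (F := F) (PosUpper n), ∀ u ∈ UPg (F := F) P, g * u * g⁻¹ ∈ UPg P) ↔
      NormalPoset P :=
  ⟨fun hc => normalPoset_of_conj_mem hc hP.1,
    fun hN _ hg _ hu => conj_mem_UPg_of_normalPoset hP.1 hN hg hu⟩
end

section
/- A subset 𝔞 of the algebra t_n of n×n upper triangular matrices over a field F is a nilpotent two-sided ideal if and only if 𝔞 = n_P for some poset P ⊆ [[n]] satisfying the normality condition: (i,l) ∉ P implies (j,k) ∉ P for all 1 ≤ i ≤ j < k ≤ l ≤ n. -/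
open scoped Classical

/-!
Sandwiching `x` between matrix units, `E_{i i'} x E_{j' j} = x_{i' j'} E_{i j}`, shows that an
ideal of `t_n` containing `x` contains every matrix unit `E_{i j}` with `i ≤ i'`, `j' ≤ j` and
`x_{i' j'} ≠ 0`. Hence a nilpotent ideal (which contains no idempotent `E_{i i}`) is spanned by
the matrix units over its support `P`, and that support is closed under enlarging intervals:
this is exactly normality, and it forces transitivity. Conversely, normality makes `n_P` stable
under multiplication by upper triangular matrices on either side, and `n_P` is nilpotent because
its elements are strictly upper triangular.
-/

open Matrix

section Posets

variable {n : ℕ} {P : Set (Fin n × Fin n)}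

theorem isPoset_of_normalPoset (hP : P ⊆ PosUpper n) (hN : NormalPoset P) : IsPoset P :=
  ⟨hP, fun i j k hij hjk => by_contra fun hik => hN i j k k (hP hij).le (hP hjk) le_rfl hik hjk⟩

end Posets

section StrictlyUpper

variable {n : ℕ} {R : Type*} [Semiring R]

theorem list_prod_apply_eq_zero_of_strictlyUpper (L : List (Matrix (Fin n) (Fin n) R))
    (hL : ∀ X ∈ L, ∀ i j : Fin n, j ≤ i → X i j = 0) (i j : Fin n)
    (hij : (j : ℕ) < i + L.length) : L.prod i j = 0 := by
  induction L generalizing i with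
  | nil =>
    exact one_apply_ne (by rintro rfl; simp at hij)
  | cons X L ih =>
    rw [List.prod_cons, mul_apply]
    refine Finset.sum_eq_zero fun k _ => ?_
    rcases le_or_gt k i with hki | hik
    · rw [hL X List.mem_cons_self i k hki, zero_mul]
    · rw [ih (fun Y hY => hL Y (List.mem_cons_of_mem _ hY)) k
        (by simp only [List.length_cons] at hij; omega), mul_zero]

theorem list_prod_eq_zero_of_strictlyUpper (L : List (Matrix (Fin n) (Fin n) R))
    (hL : ∀ X ∈ L, ∀ i j : Fin n, j ≤ i → X i j = 0) (hn : n ≤ L.length) : L.prod = 0 := by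
  ext i j
  exact list_prod_apply_eq_zero_of_strictlyUpper L hL i j (by omega)

end StrictlyUpper

section PatternAlgebra

variable {n : ℕ} {F : Type*} [Field F] {P : Set (Fin n × Fin n)}

theorem apply_eq_zero_of_mem_nPa (hP : P ⊆ PosUpper n) {X : Mat n F} (hX : X ∈ nPa P)
    {i j : Fin n} (hji : j ≤ i) : X i j = 0 :=
  hX i j fun hij => (hP hij).not_ge hji

theorem isUpperTriangular_mul_mem_nPa (hP : P ⊆ PosUpper n) (hN : NormalPoset P)
    {t X : Mat n F} (ht : t.IsUpperTriangular) (hX : X ∈ nPa P) : t * X ∈ nPa P := by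
  intro i j hij
  rw [mul_apply]
  refine Finset.sum_eq_zero fun k _ => ?_
  rcases lt_or_ge k i with hki | hik
  · rw [ht hki, zero_mul]
  · by_cases hkj : (k, j) ∈ P
    · exact absurd hkj (hN i k j j hik (hP hkj) le_rfl hij)
    · rw [hX k j hkj, mul_zero]

theorem mul_isUpperTriangular_mem_nPa (hP : P ⊆ PosUpper n) (hN : NormalPoset P)
    {t X : Mat n F} (ht : t.IsUpperTriangular) (hX : X ∈ nPa P) : X * t ∈ nPa P := by
  intro i j hij
  rw [mul_apply]
  refine Finset.sum_eq_zero fun k _ => ?_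
  rcases lt_or_ge j k with hjk | hkj
  · rw [ht hjk, mul_zero]
  · by_cases hik : (i, k) ∈ P
    · exact absurd hik (hN i i k j le_rfl (hP hik) hkj hij)
    · rw [hX i k hik, zero_mul]

end PatternAlgebra

section NilpotentIdeal

variable {n : ℕ} {F : Type*} [Field F] {a : Set (Mat n F)}

theorem single_mem_of_mem
    (hmul : ∀ x ∈ a, ∀ t : Mat n F, t.IsUpperTriangular → t * x ∈ a ∧ x * t ∈ a)
    {x : Mat n F} (hx : x ∈ a) {i i' j' j : Fin n} (hi : i ≤ i') (hj : j' ≤ j) :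
    single i j (x i' j') ∈ a := by
  have hleft := (hmul x hx _ (blockTriangular_single (b := id) hi 1)).1
  have h := (hmul _ hleft _ (blockTriangular_single (b := id) hj 1)).2
  rwa [single_mul_mul_single, one_mul, mul_one] at h

theorem single_mem_of_apply_ne_zero (hsmul : ∀ c : F, ∀ x ∈ a, c • x ∈ a)
    (hmul : ∀ x ∈ a, ∀ t : Mat n F, t.IsUpperTriangular → t * x ∈ a ∧ x * t ∈ a)
    {x : Mat n F} (hx : x ∈ a) {i i' j' j : Fin n} (hne : x i' j' ≠ 0)
    (hi : i ≤ i') (hj : j' ≤ j) (c : F) : single i j c ∈ a := by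
  have h := hsmul (c / x i' j') _ (single_mem_of_mem hmul hx hi hj)
  rwa [smul_single, smul_eq_mul, div_mul_cancel₀ c hne] at h

theorem apply_self_eq_zero_of_nilpotent (hsmul : ∀ c : F, ∀ x ∈ a, c • x ∈ a)
    (hmul : ∀ x ∈ a, ∀ t : Mat n F, t.IsUpperTriangular → t * x ∈ a ∧ x * t ∈ a)
    (hnil : ∃ m : ℕ, 0 < m ∧ ∀ f : Fin m → Mat n F, (∀ i, f i ∈ a) → (List.ofFn f).prod = 0)
    {x : Mat n F} (hx : x ∈ a) (i : Fin n) : x i i = 0 := by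
  by_contra hne
  obtain ⟨m, hm, hprod⟩ := hnil
  have hE : single i i (1 : F) ∈ a := single_mem_of_apply_ne_zero hsmul hmul hx hne le_rfl le_rfl 1
  have hidem : IsIdempotentElem (single i i (1 : F)) := by
    rw [IsIdempotentElem, single_mul_single_same, one_mul]
  have h := hprod (fun _ => single i i 1) (fun _ => hE)
  rw [List.ofFn_const, List.prod_replicate, hidem.pow_eq hm.ne'] at h
  simpa using congrFun (congrFun h i) i

theorem mem_of_forall_single_mem (h0 : (0 : Mat n F) ∈ a)
    (hadd : ∀ x ∈ a, ∀ y ∈ a, x + y ∈ a) {X : Mat n F}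
    (hX : ∀ i j, single i j (X i j) ∈ a) : X ∈ a := by
  have hadd' : ∀ x y, x ∈ a → y ∈ a → x + y ∈ a := fun x y hx hy => hadd x hx y hy
  rw [matrix_eq_sum_single X]
  refine Finset.sum_induction _ (· ∈ a) hadd' h0 fun i _ => ?_
  exact Finset.sum_induction _ (· ∈ a) hadd' h0 fun j _ => hX i j

theorem mem_iUnion_msupp {i j : Fin n} : (i, j) ∈ ⋃ x ∈ a, msupp x ↔ ∃ x ∈ a, x i j ≠ 0 := by
  simp [msupp]

theorem iUnion_msupp_subset_posUpper (ha : a ⊆ {X : Mat n F | ∀ i j : Fin n, j < i → X i j = 0})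
    (hsmul : ∀ c : F, ∀ x ∈ a, c • x ∈ a)
    (hmul : ∀ x ∈ a, ∀ t : Mat n F, t.IsUpperTriangular → t * x ∈ a ∧ x * t ∈ a)
    (hnil : ∃ m : ℕ, 0 < m ∧ ∀ f : Fin m → Mat n F, (∀ i, f i ∈ a) → (List.ofFn f).prod = 0) :
    (⋃ x ∈ a, msupp x) ⊆ PosUpper n := by
  rintro ⟨i, j⟩ hij
  obtain ⟨x, hx, hne⟩ := mem_iUnion_msupp.1 hij
  refine lt_of_le_of_ne (not_lt.1 fun hji => hne (ha hx i j hji)) ?_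
  rintro rfl
  exact hne (apply_self_eq_zero_of_nilpotent hsmul hmul hnil hx i)

theorem normalPoset_iUnion_msupp (hsmul : ∀ c : F, ∀ x ∈ a, c • x ∈ a)
    (hmul : ∀ x ∈ a, ∀ t : Mat n F, t.IsUpperTriangular → t * x ∈ a ∧ x * t ∈ a) :
    NormalPoset (⋃ x ∈ a, msupp x) := by
  intro i j k l hij _ hkl hil hjk
  obtain ⟨x, hx, hne⟩ := mem_iUnion_msupp.1 hjk
  exact hil (mem_iUnion_msupp.2
    ⟨_, single_mem_of_apply_ne_zero hsmul hmul hx hne hij hkl 1, by simp⟩)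

theorem eq_nPa_iUnion_msupp (h0 : (0 : Mat n F) ∈ a) (hadd : ∀ x ∈ a, ∀ y ∈ a, x + y ∈ a)
    (hsmul : ∀ c : F, ∀ x ∈ a, c • x ∈ a)
    (hmul : ∀ x ∈ a, ∀ t : Mat n F, t.IsUpperTriangular → t * x ∈ a ∧ x * t ∈ a) :
    a = nPa (⋃ x ∈ a, msupp x) := by
  refine Set.Subset.antisymm (fun x hx i j hij => ?_) fun X hX => ?_
  · exact not_not.1 fun hne => hij (mem_iUnion_msupp.2 ⟨x, hx, hne⟩)
  refine mem_of_forall_single_mem h0 hadd fun i j => ?_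
  by_cases hij : (i, j) ∈ ⋃ x ∈ a, msupp x
  · obtain ⟨x, hx, hne⟩ := mem_iUnion_msupp.1 hij
    exact single_mem_of_apply_ne_zero hsmul hmul hx hne le_rfl le_rfl _
  · rw [hX i j hij, single_zero]
    exact h0

end NilpotentIdeal

/-- A subset of the algebra of upper triangular matrices is a
nilpotent two-sided ideal iff it equals `n_P` for a poset `P` normal in `[[n]]`. -/
theorem nilpotent_ideal_iff_normal_pattern {n : ℕ} {F : Type*} [Field F]
    (a : Set (Mat n F)) (ha : a ⊆ {X : Mat n F | ∀ i j : Fin n, j < i → X i j = 0}) :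
    ((0 : Mat n F) ∈ a ∧ (∀ x ∈ a, ∀ y ∈ a, x + y ∈ a) ∧ (∀ x ∈ a, -x ∈ a) ∧
      (∀ c : F, ∀ x ∈ a, c • x ∈ a) ∧
      (∀ x ∈ a, ∀ t : Mat n F, (∀ i j : Fin n, j < i → t i j = 0) →
        t * x ∈ a ∧ x * t ∈ a) ∧
      (∃ m : ℕ, 0 < m ∧ ∀ f : Fin m → Mat n F, (∀ i, f i ∈ a) →
        (List.ofFn f).prod = 0)) ↔
      ∃ P : Set (Fin n × Fin n), IsPoset P ∧ NormalPoset P ∧ a = nPa P := by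
  constructor
  · rintro ⟨h0, hadd, -, hsmul, hmul, hnil⟩
    have hnormal := normalPoset_iUnion_msupp hsmul hmul
    exact ⟨_, isPoset_of_normalPoset (iUnion_msupp_subset_posUpper ha hsmul hmul hnil) hnormal,
      hnormal, eq_nPa_iUnion_msupp h0 hadd hsmul hmul⟩
  · rintro ⟨P, ⟨hP, -⟩, hN, rfl⟩
    refine ⟨fun i j _ => rfl, fun x hx y hy i j hij => ?_, fun x hx i j hij => ?_,
      fun c x hx i j hij => ?_, fun x hx t ht => ⟨isUpperTriangular_mul_mem_nPa hP hN ht hx,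
        mul_isUpperTriangular_mem_nPa hP hN ht hx⟩, n + 1, n.succ_pos, fun f hf => ?_⟩
    · simp [hx i j hij, hy i j hij]
    · simp [hx i j hij]
    · simp [hx i j hij]
    · refine list_prod_eq_zero_of_strictlyUpper _ ?_ (by simp)
      intro X hX
      obtain ⟨k, rfl⟩ := List.mem_ofFn.1 hX
      exact fun i j hji => apply_eq_zero_of_mem_nPa hP (hf k) hji
end

section
/- The number of posets P ⊆ [[n]] satisfying the normality condition (for all 1 ≤ i ≤ j < k ≤ l ≤ n, (i,l) ∉ P implies (j,k) ∉ P) equals the n-th Catalan number C_n = (1/(n+1)) * binomial(2n, n). -/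
open scoped Classical

/-!
A normal subset `P` of `[[n]]` is determined by its column heights `g j = #{i | (i, j) ∈ P}`:
normality makes every column an initial segment `{i | i < g j}` and makes `g` monotone, while
`P ⊆ [[n]]` gives `g j ≤ j`. Conversely every such subdiagonal monotone sequence arises. These
sequences are Dyck paths in disguise: splitting one of length `n + 1` at the last index `k` with
`g k = k` leaves an arbitrary sequence of length `k` and, after lowering by `k`, one of length
`n - k`, which is the recursion `C (n + 1) = ∑ C k * C (n - k)`.
-/

open Finset

section NormalSets

variable {n : ℕ}

lemma NormalPoset.mem_of_le_of_le {P : Set (Fin n × Fin n)} (hP : NormalPoset P)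
    (hPU : P ⊆ PosUpper n) {i j k l : Fin n} (hjk : (j, k) ∈ P) (hij : i ≤ j)
    (hkl : k ≤ l) : (i, l) ∈ P := by
  by_contra hil
  exact hP i j k l hij (hPU hjk) hkl hil hjk

noncomputable def colHeight (P : Set (Fin n × Fin n)) (j : Fin n) : ℕ := #{i | (i, j) ∈ P}

lemma lt_colHeight_iff {P : Set (Fin n × Fin n)} (hP : NormalPoset P) (hPU : P ⊆ PosUpper n)
    (i j : Fin n) : i < colHeight P j ↔ (i, j) ∈ P :=
  Fin.lt_card_filter_univ_iff_apply_of_imp _ fun _ _ hle hmem =>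
    hP.mem_of_le_of_le hPU hmem hle le_rfl

lemma colHeight_monotone {P : Set (Fin n × Fin n)} (hP : NormalPoset P) (hPU : P ⊆ PosUpper n) :
    Monotone (colHeight P) := fun _ _ hjl =>
  card_le_card fun i hi => by
    simp only [mem_filter, mem_univ, true_and] at hi ⊢
    exact hP.mem_of_le_of_le hPU hi le_rfl hjl

lemma colHeight_le {P : Set (Fin n × Fin n)} (hPU : P ⊆ PosUpper n) (j : Fin n) :
    colHeight P j ≤ j :=
  calc colHeight P j ≤ #(Iio j) :=
        card_le_card fun _ hi => mem_Iio.mpr (hPU (mem_filter.mp hi).2)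
    _ = j := Fin.card_Iio j

end NormalSets

def SubdiagSeq (n : ℕ) : Type := {g : Fin n → ℕ // Monotone g ∧ ∀ i : Fin n, g i ≤ i}

namespace SubdiagSeq

instance (n : ℕ) : Finite (SubdiagSeq n) :=
  Finite.of_injective (fun g i => (⟨g.1 i, (g.2.2 i).trans_lt i.isLt⟩ : Fin n)) fun _ _ h =>
    Subtype.ext <| funext fun i => congrArg Fin.val (congrFun h i)

section Glue

variable {n : ℕ} (k : ℕ) (u : Fin k → ℕ) (v : Fin (n - k) → ℕ)

def glueFun (i : Fin (n + 1)) : ℕ :=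
  if h : i.val < k then u ⟨i, h⟩
  else if h' : i.val = k then k
  else k + v ⟨i - (k + 1), by omega⟩

variable {k u v}

lemma glueFun_of_lt {i : Fin (n + 1)} (h : i.val < k) : glueFun k u v i = u ⟨i, h⟩ := dif_pos h

lemma glueFun_of_eq {i : Fin (n + 1)} (h : i.val = k) : glueFun k u v i = k := by
  rw [glueFun, dif_neg (by omega), dif_pos h]

lemma glueFun_of_gt {i : Fin (n + 1)} (h : k < i.val) :
    glueFun k u v i = k + v ⟨i - (k + 1), by omega⟩ := by
  rw [glueFun, dif_neg (by omega), dif_neg (by omega)]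

lemma glueFun_mk_of_lt (i : Fin k) (hi : (i : ℕ) < n + 1) : glueFun k u v ⟨i, hi⟩ = u i :=
  glueFun_of_lt i.isLt

lemma glueFun_mk_add (j : Fin (n - k)) (hj : k + 1 + j < n + 1) :
    glueFun k u v ⟨k + 1 + j, hj⟩ = k + v j := by
  rw [glueFun_of_gt (by simp only; omega)]
  congr
  simp only
  omega

lemma glueFun_lt (hv : ∀ j, v j ≤ j) {i : Fin (n + 1)} (h : k < i.val) :
    glueFun k u v i < i := by
  have := hv ⟨i - (k + 1), by omega⟩
  simp only at this
  rw [glueFun_of_gt h]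
  omega

lemma glueFun_le (hu : ∀ i, u i ≤ i) (hv : ∀ j, v j ≤ j) (i : Fin (n + 1)) :
    glueFun k u v i ≤ i := by
  rcases lt_trichotomy i.val k with h | h | h
  · rw [glueFun_of_lt h]
    exact hu _
  · rw [glueFun_of_eq h, h]
  · exact (glueFun_lt hv h).le

lemma glueFun_monotone (hu : Monotone u) (hu' : ∀ i, u i ≤ i) (hv : Monotone v)
    (hv' : ∀ j, v j ≤ j) : Monotone (glueFun k u v) := by
  intro i j hij
  rcases lt_trichotomy j.val k with hj | hj | hj
  · rw [glueFun_of_lt hj, glueFun_of_lt (lt_of_le_of_lt hij hj)]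
    exact hu (Fin.mk_le_mk.mpr hij)
  · rw [glueFun_of_eq hj]
    exact (glueFun_le hu' hv' i).trans (hj ▸ hij)
  · rw [glueFun_of_gt hj]
    by_cases hi : i.val ≤ k
    · have := glueFun_le hu' hv' i
      omega
    · rw [glueFun_of_gt (not_le.mp hi)]
      exact Nat.add_le_add_left (hv (Fin.mk_le_mk.mpr (by omega))) k

variable (n) in
def glue (x : Σ k : Fin (n + 1), SubdiagSeq k × SubdiagSeq (n - k)) : SubdiagSeq (n + 1) :=
  ⟨glueFun x.1 x.2.1.1 x.2.2.1,
    glueFun_monotone x.2.1.2.1 x.2.1.2.2 x.2.2.2.1 x.2.2.2.2, glueFun_le x.2.1.2.2 x.2.2.2.2⟩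

end Glue

section LastTouch

variable {n : ℕ} (g : SubdiagSeq (n + 1))

def lastTouch : Fin (n + 1) :=
  ({i | g.1 i = i} : Finset _).max' ⟨0, by simpa using g.2.2 0⟩

lemma apply_lastTouch : g.1 (lastTouch g) = lastTouch g :=
  (mem_filter.mp (max'_mem {i | g.1 i = i} _)).2

lemma apply_lt_of_lastTouch_lt {i : Fin (n + 1)} (h : lastTouch g < i) : g.1 i < i := by
  refine (g.2.2 i).lt_of_ne fun hi => h.not_ge ?_
  exact le_max' _ i (by simpa using hi)

lemma lastTouch_glue (x : Σ k : Fin (n + 1), SubdiagSeq k × SubdiagSeq (n - k)) :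
    lastTouch (glue n x) = x.1 := by
  refine le_antisymm (max'_le _ _ _ fun i hi => ?_) (le_max' _ _ ?_)
  · by_contra! h
    exact (glueFun_lt x.2.2.2.2 h).ne (mem_filter.mp hi).2
  · exact mem_filter.mpr ⟨mem_univ _, glueFun_of_eq rfl⟩

lemma apply_sub_lastTouch_le (j : ℕ) (hj : lastTouch g + 1 + j < n + 1) :
    g.1 ⟨lastTouch g + 1 + j, hj⟩ - lastTouch g ≤ j := by
  have := apply_lt_of_lastTouch_lt g (i := ⟨_, hj⟩) (Fin.lt_def.mpr (by simp only; omega))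
  simp only at this
  omega

def split : Σ k : Fin (n + 1), SubdiagSeq k × SubdiagSeq (n - k) :=
  ⟨lastTouch g, ⟨fun i => g.1 ⟨i, by omega⟩, fun _ _ hab => g.2.1 hab, fun _ => g.2.2 _⟩,
    ⟨fun j => g.1 ⟨lastTouch g + 1 + j, by have := j.isLt; omega⟩ - lastTouch g,
      fun _ _ hab => Nat.sub_le_sub_right (g.2.1 (Fin.mk_le_mk.mpr (by simpa using hab))) _,
      fun j => apply_sub_lastTouch_le g j _⟩⟩

lemma glue_split : glue n (split g) = g := by
  refine Subtype.ext (funext fun i => ?_)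
  rcases lt_trichotomy i.val (lastTouch g) with h | h | h
  · exact glueFun_of_lt h
  · rw [show i = lastTouch g from Fin.ext h]
    exact (glueFun_of_eq rfl).trans (apply_lastTouch g).symm
  · have := g.2.1 h.le
    rw [apply_lastTouch] at this
    have hi : (⟨lastTouch g + 1 + (i - (lastTouch g + 1)), by omega⟩ : Fin (n + 1)) = i :=
      Fin.ext (by simp only; omega)
    refine (glueFun_of_gt h).trans ?_
    show _ + (g.1 _ - _) = _
    rw [hi]
    omega

end LastTouch

lemma glue_injective (n : ℕ) : Function.Injective (glue n) := by
  rintro ⟨k, u, v⟩ ⟨k', u', v'⟩ h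
  obtain rfl : k = k' := by simpa only [lastTouch_glue] using congrArg lastTouch h
  have h : glueFun k u.1 v.1 = glueFun k u'.1 v'.1 := congrArg Subtype.val h
  congr
  · refine Subtype.ext (funext fun i => ?_)
    have := congrFun h ⟨i, by omega⟩
    rwa [glueFun_mk_of_lt, glueFun_mk_of_lt] at this
  · refine Subtype.ext (funext fun j => ?_)
    have := congrFun h ⟨k + 1 + j, by omega⟩
    rwa [glueFun_mk_add, glueFun_mk_add, Nat.add_left_cancel_iff] at this

lemma card_succ (n : ℕ) : Nat.card (SubdiagSeq (n + 1)) =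
    ∑ k : Fin (n + 1), Nat.card (SubdiagSeq k) * Nat.card (SubdiagSeq (n - k)) := by
  rw [← Nat.card_eq_of_bijective _ ⟨glue_injective n, fun g => ⟨split g, glue_split g⟩⟩,
    Nat.card_sigma]
  simp only [Nat.card_prod]

theorem card_eq_catalan (n : ℕ) : Nat.card (SubdiagSeq n) = catalan n := by
  induction n using Nat.strong_induction_on with
  | _ n ih =>
  cases n with
  | zero =>
    have : Unique (SubdiagSeq 0) :=
      ⟨⟨⟨Fin.elim0, fun i => i.elim0, fun i => i.elim0⟩⟩,
        fun _ => Subtype.ext (funext fun i => i.elim0)⟩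
    exact Nat.card_unique (α := SubdiagSeq 0) |>.trans catalan_zero.symm
  | succ n =>
    rw [card_succ, catalan_succ]
    exact sum_congr rfl fun k _ => by rw [ih k (by omega), ih (n - k) (by omega)]

section NormalSets

variable {n : ℕ}

def normalSet (g : SubdiagSeq n) : Set (Fin n × Fin n) := {p | p.1 < g.1 p.2}

lemma mem_normalSet {g : SubdiagSeq n} {p : Fin n × Fin n} :
    p ∈ g.normalSet ↔ p.1 < g.1 p.2 := Iff.rfl

lemma normalSet_subset_posUpper (g : SubdiagSeq n) : g.normalSet ⊆ PosUpper n :=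
  fun p hp => Fin.lt_def.mpr (mem_normalSet.mp hp |>.trans_le (g.2.2 p.2))

lemma normalPoset_normalSet (g : SubdiagSeq n) : NormalPoset g.normalSet :=
  fun _ _ _ _ hij _ hkl hil hjk =>
    hil <| (Fin.le_def.mp hij).trans_lt (mem_normalSet.mp hjk |>.trans_le (g.2.1 hkl))

noncomputable def equivNormalSet (n : ℕ) :
    SubdiagSeq n ≃ {P : Set (Fin n × Fin n) // P ⊆ PosUpper n ∧ NormalPoset P} where
  toFun g := ⟨g.normalSet, g.normalSet_subset_posUpper, g.normalPoset_normalSet⟩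
  invFun P := ⟨colHeight P.1, colHeight_monotone P.2.2 P.2.1, colHeight_le P.2.1⟩
  left_inv g := Subtype.ext <| funext fun j => by
    simp only [colHeight, mem_normalSet, Fin.card_filter_val_lt]
    exact min_eq_right ((g.2.2 j).trans j.isLt.le)
  right_inv P := Subtype.ext <| Set.ext fun p => lt_colHeight_iff P.2.2 P.2.1 p.1 p.2

end NormalSets

end SubdiagSeq


/-- The number of subsets of `[[n]]` satisfying the normality
condition is the `n`-th Catalan number. -/
theorem card_normal_posets_eq_catalan (n : ℕ) :
    Nat.card {P : Set (Fin n × Fin n) // P ⊆ PosUpper n ∧ NormalPoset P} = catalan n := by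
  rw [← Nat.card_congr (SubdiagSeq.equivNormalSet n), SubdiagSeq.card_eq_catalan]
end

section
/- Let P ⊆ [[n]] be a poset normal in [[n]] and let λ ∈ S_P be an F_q-labeled set partition (a matrix in n_P with at most one nonzero entry in each row and column), viewed in n_P, and let Q ∈ {P, [[n]]}. Then the left orbit U_Q λ = {λ + Z ∈ n_P : supp(Z) ⊆ adj^L_Q(λ)}, where adj^L_Q(λ) = {(i,k) : ∃ j with (j,k) ∈ supp(λ) and (i,j) ∈ Q}. In particular |U_Q λ| = q^{|adj^L_Q(λ)|}. -/
open scoped Classical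

/-- Positions reachable on the left: `adj^L_Q(λ)`. -/
def adjL {n : ℕ} {F : Type*} [Field F] (Q : Set (Fin n × Fin n)) (lam : Mat n F) :
    Set (Fin n × Fin n) :=
  {p | ∃ j : Fin n, (j, p.2) ∈ msupp lam ∧ (p.1, j) ∈ Q}

/-- Positions reachable on the right: `adj^R_Q(λ)`. -/
def adjR {n : ℕ} {F : Type*} [Field F] (Q : Set (Fin n × Fin n)) (lam : Mat n F) :
    Set (Fin n × Fin n) :=
  {p | ∃ j : Fin n, (p.1, j) ∈ msupp lam ∧ (j, p.2) ∈ Q}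

/-- `adj_Q(λ) = adj^L_Q(λ) ∪ adj^R_Q(λ)`. -/
def adjF {n : ℕ} {F : Type*} [Field F] (Q : Set (Fin n × Fin n)) (lam : Mat n F) :
    Set (Fin n × Fin n) := adjL Q lam ∪ adjR Q lam

/-- `aux^L_P(λ) = adj^L_{[[n]]}(λ) \ adj^L_P(λ)`. -/
def auxL {n : ℕ} {F : Type*} [Field F] (P : Set (Fin n × Fin n)) (lam : Mat n F) :
    Set (Fin n × Fin n) := adjL (PosUpper n) lam \ adjL P lam

/-- `aux_P(λ) = adj_{[[n]]}(λ) \ adj_P(λ)`. -/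
def auxF {n : ℕ} {F : Type*} [Field F] (P : Set (Fin n × Fin n)) (lam : Mat n F) :
    Set (Fin n × Fin n) := adjF (PosUpper n) lam \ adjF P lam

/-- Description of the left orbit `U_Q λ` for `Q ∈ {P, [[n]]}` and
its cardinality `q^{|adj^L_Q(λ)|}`. -/
theorem left_orbit_eq_and_card {n : ℕ} {F : Type*} [Field F] [Fintype F]
    (P Q : Set (Fin n × Fin n)) (hP : IsPoset P) (hN : NormalPoset P)
    (hQ : Q = P ∨ Q = PosUpper n) (lam : Mat n F) (hlam : lam ∈ SPa P) :
    {x : Mat n F | ∃ g ∈ UPg (F := F) Q, x = g * lam} =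
        {x : Mat n F | msupp (x - lam) ⊆ adjL Q lam} ∧
      Nat.card {x : Mat n F | ∃ g ∈ UPg (F := F) Q, x = g * lam} =
        Fintype.card F ^ (adjL Q lam).ncard := by
  classical
  have hQsub : Q ⊆ PosUpper n := by
    rcases hQ with rfl | rfl
    · exact hP.1
    · exact le_refl _
  obtain ⟨hlamP, hrow, hcol⟩ := hlam
  set S := adjL Q lam with hS
  have hset : {x : Mat n F | ∃ g ∈ UPg (F := F) Q, x = g * lam} =
      {x : Mat n F | msupp (x - lam) ⊆ S} := by
    ext x
    constructor
    · rintro ⟨g, ⟨hd, hz⟩, rfl⟩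
      intro p hp
      by_contra hpS
      apply hp
      show (g * lam - lam) p.1 p.2 = 0
      have hmul : (g * lam) p.1 p.2 = lam p.1 p.2 := by
        rw [Matrix.mul_apply]
        rw [Finset.sum_eq_single p.1]
        · rw [hd]; ring
        · intro j _ hj
          by_cases hl : lam j p.2 = 0
          · rw [hl, mul_zero]
          · have hq : (p.1, j) ∉ Q := fun hq => hpS ⟨j, hl, hq⟩
            rw [hz p.1 j (Ne.symm hj) hq, zero_mul]
        · intro h; exact absurd (Finset.mem_univ p.1) h
      simp [Matrix.sub_apply, hmul]
    · intro hx
      set W : Mat n F := Matrix.of (fun i j => if h : (i, j) ∈ Q ∧ ∃ k, lam j k ≠ 0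
          then (x - lam) i (h.2.choose) / lam j (h.2.choose) else 0) with hW
      have hWz : ∀ i j : Fin n, (i, j) ∉ Q → W i j = 0 := by
        intro i j hij
        simp only [hW, Matrix.of_apply]
        rw [dif_neg]
        intro h; exact hij h.1
      refine ⟨1 + W, ⟨?_, ?_⟩, ?_⟩
      · intro i
        have : (i, i) ∉ Q := fun h => lt_irrefl i (hQsub h)
        simp [Matrix.add_apply, Matrix.one_apply_eq, hWz i i this]
      · intro i j hij hijQ
        simp [Matrix.add_apply, Matrix.one_apply_ne hij, hWz i j hijQ]
      · have key : ∀ i k : Fin n, (W * lam) i k = (x - lam) i k := by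
          intro i k
          rw [Matrix.mul_apply]
          by_cases hex : ∃ j₀, lam j₀ k ≠ 0
          · obtain ⟨j₀, hj₀⟩ := hex
            rw [Finset.sum_eq_single j₀]
            · by_cases hq : (i, j₀) ∈ Q
              · have hcond : (i, j₀) ∈ Q ∧ ∃ k', lam j₀ k' ≠ 0 := ⟨hq, ⟨k, hj₀⟩⟩
                simp only [hW, Matrix.of_apply]
                rw [dif_pos hcond]
                have hkk : hcond.2.choose = k := hrow j₀ _ k hcond.2.choose_spec hj₀
                rw [hkk, div_mul_cancel₀ _ hj₀]
              · have hWij : W i j₀ = 0 := hWz i j₀ hq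
                have hxz : (x - lam) i k = 0 := by
                  by_contra hne
                  obtain ⟨j, hjk, hjq⟩ := hx (show ((i, k) ∈ msupp (x - lam)) from hne)
                  exact hq (by rwa [hcol j j₀ k hjk hj₀] at hjq)
                rw [hWij, zero_mul, hxz]
            · intro j _ hj
              by_cases hl : lam j k = 0
              · rw [hl, mul_zero]
              · exact absurd (hcol j j₀ k hl hj₀) hj
            · intro h; exact absurd (Finset.mem_univ j₀) h
          · push_neg at hex
            have hxz : (x - lam) i k = 0 := by
              by_contra hne
              obtain ⟨j, hjk, _⟩ := hx (show ((i, k) ∈ msupp (x - lam)) from hne)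
              exact hjk (hex j)
            rw [hxz, Finset.sum_eq_zero]
            intro j _
            rw [hex j, mul_zero]
        ext i k
        rw [Matrix.add_mul, Matrix.one_mul, Matrix.add_apply, key i k, Matrix.sub_apply]
        ring
  refine ⟨hset, ?_⟩
  rw [hset]
  have e : {x : Mat n F // msupp (x - lam) ⊆ S} ≃ (S → F) :=
    { toFun := fun x s => (x.1 - lam) s.1.1 s.1.2
      invFun := fun f => ⟨lam + Matrix.of (fun i j =>
          if h : (i, j) ∈ S then f ⟨(i, j), h⟩ else 0), by
        intro p hp
        have : (lam + Matrix.of (fun i j =>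
            if h : (i, j) ∈ S then f ⟨(i, j), h⟩ else 0) - lam) p.1 p.2 ≠ 0 := hp
        simp only [Matrix.sub_apply, Matrix.add_apply, Matrix.of_apply,
          add_sub_cancel_left] at this
        by_contra hps
        rw [dif_neg hps] at this
        exact this rfl⟩
      left_inv := by
        intro x
        apply Subtype.ext
        ext i j
        simp only [Matrix.add_apply, Matrix.of_apply]
        by_cases h : (i, j) ∈ S
        · rw [dif_pos h]
          simp [Matrix.sub_apply]
        · rw [dif_neg h]
          have : (x.1 - lam) i j = 0 := by
            by_contra hne
            exact h (x.2 hne)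
          simp only [Matrix.sub_apply, sub_eq_zero] at this
          simp [this]
      right_inv := by
        intro f
        funext s
        obtain ⟨⟨a, b⟩, hs⟩ := s
        simp [Matrix.sub_apply, Matrix.add_apply, hs] }
  have hfinS : Finite (↥S) := Subtype.finite
  calc Nat.card {x : Mat n F | msupp (x - lam) ⊆ S}
      = Nat.card (↥S → F) := Nat.card_congr e
    _ = Nat.card F ^ Nat.card ↥S := Nat.card_fun
    _ = Fintype.card F ^ S.ncard := by
        rw [Nat.card_eq_fintype_card, Nat.card_coe_set_eq]
end

section
/- Let P ⊆ [[n]] be a poset normal in [[n]], λ ∈ S_P a labeled set partition, and Q ∈ {P, [[n]]}. Then the cardinality of the two-sided orbit U_Q λ U_Q equals q^{|adj_Q(λ)|}, where adj_Q(λ) = adj^L_Q(λ) ∪ adj^R_Q(λ), adj^L_Q(λ) = {(i,k) : ∃ j, (j,k) ∈ supp(λ), (i,j) ∈ Q}, and adj^R_Q(λ) = {(i,k) : ∃ j, (i,j) ∈ supp(λ), (j,k) ∈ Q}. -/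
open scoped Classical

section TwoSidedAux
variable {n : ℕ} {F : Type*} [Field F]

variable {n : ℕ} {F : Type*} [Field F]

lemma nPa_pow_succ {Q : Set (Fin n × Fin n)}
    (htr : ∀ i j k : Fin n, (i, j) ∈ Q → (j, k) ∈ Q → (i, k) ∈ Q)
    {a : Mat n F} (ha : a ∈ nPa Q) : ∀ k : ℕ, a ^ (k + 1) ∈ nPa Q := by
  intro k
  induction k with
  | zero => simpa using ha
  | succ m ih =>
    intro i j hij
    rw [pow_succ, Matrix.mul_apply]
    refine Finset.sum_eq_zero fun m' _ => ?_
    by_cases h1 : (i, m') ∈ Q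
    · by_cases h2 : (m', j) ∈ Q
      · exact absurd (htr _ _ _ h1 h2) hij
      · rw [ha _ _ h2, mul_zero]
    · rw [ih _ _ h1, zero_mul]

lemma strictUpper_pow {a : Mat n F} (ha : ∀ i j : Fin n, ¬ i < j → a i j = 0) :
    ∀ (k : ℕ) (i j : Fin n), (j : ℕ) < (i : ℕ) + k → (a ^ k) i j = 0 := by
  intro k
  induction k with
  | zero =>
    intro i j h
    rw [pow_zero]
    have hne : i ≠ j := fun he => by simp [he] at h
    exact Matrix.one_apply_ne hne
  | succ m ih =>
    intro i j h
    rw [pow_succ, Matrix.mul_apply]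
    refine Finset.sum_eq_zero fun m' _ => ?_
    by_cases h1 : (m' : ℕ) < (i : ℕ) + m
    · rw [ih i m' h1, zero_mul]
    · rw [ha m' j (by simp only [Fin.lt_def]; omega), mul_zero]

lemma UPg_one : (1 : Mat n F) ∈ UPg (F := F) (n := n) Q := by
  exact ⟨fun i => Matrix.one_apply_eq i, fun i j hij _ => Matrix.one_apply_ne hij⟩

lemma UPg_mul {Q : Set (Fin n × Fin n)} (hup : Q ⊆ PosUpper n)
    (htr : ∀ i j k : Fin n, (i, j) ∈ Q → (j, k) ∈ Q → (i, k) ∈ Q)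
    {g h : Mat n F} (hg : g ∈ UPg Q) (hh : h ∈ UPg Q) : g * h ∈ UPg (F := F) Q := by
  have key : ∀ i j : Fin n, g i j ≠ 0 → i = j ∨ (i, j) ∈ Q := by
    intro i j hne
    by_cases hij : i = j
    · exact Or.inl hij
    · by_cases hQ : (i, j) ∈ Q
      · exact Or.inr hQ
      · exact absurd (hg.2 i j hij hQ) hne
  have keyh : ∀ i j : Fin n, h i j ≠ 0 → i = j ∨ (i, j) ∈ Q := by
    intro i j hne
    by_cases hij : i = j
    · exact Or.inl hij
    · by_cases hQ : (i, j) ∈ Q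
      · exact Or.inr hQ
      · exact absurd (hh.2 i j hij hQ) hne
  constructor
  · intro i
    rw [Matrix.mul_apply, Finset.sum_eq_single i]
    · rw [hg.1 i, hh.1 i, one_mul]
    · intro m _ hm
      by_cases h1 : g i m = 0
      · rw [h1, zero_mul]
      · rcases key i m h1 with h2 | h2
        · exact absurd h2.symm hm
        · have h3 : h m i = 0 := by
            by_contra h4
            rcases keyh m i h4 with h5 | h5
            · exact hm h5
            · exact absurd (hup (htr _ _ _ h2 h5)) (lt_irrefl i)
          rw [h3, mul_zero]
    · simp
  · intro i j hij hQ
    rw [Matrix.mul_apply]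
    refine Finset.sum_eq_zero fun m _ => ?_
    by_cases h1 : g i m = 0
    · rw [h1, zero_mul]
    · by_cases h2 : h m j = 0
      · rw [h2, mul_zero]
      · exfalso
        rcases key i m h1 with h3 | h3 <;> rcases keyh m j h2 with h4 | h4
        · exact hij (h3.trans h4)
        · exact hQ (h3 ▸ h4)
        · exact hQ (h4 ▸ h3)
        · exact hQ (htr _ _ _ h3 h4)

lemma UPg_inv {Q : Set (Fin n × Fin n)} (hup : Q ⊆ PosUpper n)
    (htr : ∀ i j k : Fin n, (i, j) ∈ Q → (j, k) ∈ Q → (i, k) ∈ Q)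
    {g : Mat n F} (hg : g ∈ UPg Q) :
    ∃ g' ∈ UPg (F := F) Q, g * g' = 1 ∧ g' * g = 1 := by
  set a : Mat n F := g - 1 with hadef
  have ha : a ∈ nPa Q := by
    intro i j hij
    by_cases hij' : i = j
    · subst hij'; simp [hadef, Matrix.sub_apply, hg.1 i]
    · simp [hadef, Matrix.sub_apply, hg.2 i j hij' hij, Matrix.one_apply_ne hij']
  have ha' : (-a) ∈ nPa Q := fun i j hij => by
    simp [Matrix.neg_apply, ha i j hij]
  have hup' : ∀ i j : Fin n, ¬ i < j → (-a) i j = 0 := fun i j hij =>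
    ha' i j (fun hQ => hij (hup hQ))
  have hnil : (-a) ^ n = 0 := by
    ext i j
    rw [Matrix.zero_apply]
    exact strictUpper_pow hup' n i j (by omega)
  set g' : Mat n F := ∑ k ∈ Finset.range n, (-a) ^ k with hg'def
  have hgeq : g = 1 + a := by simp [hadef]
  have hdiagQ : ∀ i : Fin n, (i, i) ∉ Q := fun i hQ => lt_irrefl i (hup hQ)
  have hmul1 : g * g' = 1 := by
    have h1 : (-a - 1) * g' = (-a) ^ n - 1 := mul_geom_sum (-a) n
    rw [hnil, zero_sub] at h1
    have h2 : -a - 1 = -g := by rw [hgeq]; abel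
    rw [h2, neg_mul] at h1
    have := neg_injective h1
    simpa using this
  have hmul2 : g' * g = 1 := by
    have h1 : g' * (-a - 1) = (-a) ^ n - 1 := geom_sum_mul (-a) n
    rw [hnil, zero_sub] at h1
    have h2 : -a - 1 = -g := by rw [hgeq]; abel
    rw [h2, mul_neg] at h1
    have := neg_injective h1
    simpa using this
  refine ⟨g', ⟨?_, ?_⟩, hmul1, hmul2⟩
  · intro i
    rw [hg'def, Matrix.sum_apply]
    rw [Finset.sum_eq_single 0]
    · simp
    · intro k _ hk0
      obtain ⟨m, rfl⟩ := Nat.exists_eq_succ_of_ne_zero hk0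
      exact nPa_pow_succ htr ha' m i i (hdiagQ i)
    · intro h0
      exact absurd (Finset.mem_range.mpr i.pos) h0
  · intro i j hij hQ
    rw [hg'def, Matrix.sum_apply]
    refine Finset.sum_eq_zero fun k _ => ?_
    match k with
    | 0 => simpa using Matrix.one_apply_ne hij
    | (m+1) => exact nPa_pow_succ htr ha' m i j hQ

variable {n : ℕ} {F : Type*} [Field F]

lemma card_supported [Fintype F] (S : Set (Fin n × Fin n)) :
    {X : Mat n F | msupp X ⊆ S}.ncard = Fintype.card F ^ S.ncard := by
  have e : {X : Mat n F | msupp X ⊆ S} ≃ (S → F) :=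
    { toFun := fun X p => X.1 p.1.1 p.1.2
      invFun := fun f =>
        ⟨Matrix.of fun i j => if h : (i, j) ∈ S then f ⟨(i, j), h⟩ else 0, by
          intro p hp
          by_contra hns
          exact hp (dif_neg hns)⟩
      left_inv := by
        intro X
        ext i j
        by_cases h : (i, j) ∈ S
        · simp [Matrix.of_apply, h]
        · simp only [Matrix.of_apply, dif_neg h]
          by_contra hne
          exact h (X.2 (show (i, j) ∈ msupp X.1 from fun h0 => hne h0.symm))
      right_inv := by
        intro f
        funext p
        simp only [Matrix.of_apply]
        rw [dif_pos (show ((p.1.1, p.1.2) : Fin n × Fin n) ∈ S by simpa using p.2)] }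
  rw [← Nat.card_coe_set_eq, Nat.card_congr e, Nat.card_fun,
    Nat.card_eq_fintype_card (α := F), Nat.card_coe_set_eq]

lemma Lset_eq {Q : Set (Fin n × Fin n)} (hup : Q ⊆ PosUpper n) (lam : Mat n F)
    (hrow : ∀ i j j' : Fin n, lam i j ≠ 0 → lam i j' ≠ 0 → j = j')
    (hcol : ∀ i i' j : Fin n, lam i j ≠ 0 → lam i' j ≠ 0 → i = i') :
    {x : Mat n F | ∃ g ∈ UPg (F := F) Q, x = g * lam}
      = (fun X => lam + X) '' {X : Mat n F | msupp X ⊆ adjL Q lam} := by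
  ext x
  constructor
  · rintro ⟨g, hg, rfl⟩
    refine ⟨(g - 1) * lam, ?_, by show lam + _ = _; rw [sub_mul, one_mul, add_sub_cancel]⟩
    intro p hp
    have hp' : ((g - 1) * lam) p.1 p.2 ≠ 0 := hp
    rw [Matrix.mul_apply] at hp'
    obtain ⟨j, _, hterm⟩ := Finset.exists_ne_zero_of_sum_ne_zero hp'
    have h1 : (g - 1) p.1 j ≠ 0 := left_ne_zero_of_mul hterm
    have h2 : lam j p.2 ≠ 0 := right_ne_zero_of_mul hterm
    have hQ : (p.1, j) ∈ Q := by
      by_contra hQ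
      apply h1
      by_cases he : p.1 = j
      · subst he; simp [Matrix.sub_apply, hg.1 p.1]
      · simp [Matrix.sub_apply, hg.2 p.1 j he hQ, Matrix.one_apply_ne he]
    exact ⟨j, h2, hQ⟩
  · rintro ⟨X, hX, rfl⟩
    simp only [Set.mem_setOf_eq] at hX
    set a : Mat n F :=
      Matrix.of fun i m => ∑ k : Fin n, if lam m k ≠ 0 then X i k * (lam m k)⁻¹ else 0
      with hadef
    have hXadj : ∀ i k : Fin n, X i k ≠ 0 → (i, k) ∈ adjL Q lam := fun i k h => hX h
    have ha_val : ∀ i j k : Fin n, lam j k ≠ 0 → a i j = X i k * (lam j k)⁻¹ := by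
      intro i j k hjk
      rw [hadef, Matrix.of_apply, Finset.sum_eq_single k]
      · rw [if_pos hjk]
      · intro k' _ hk'
        rw [if_neg]
        intro h
        exact hk' (hrow j k' k h hjk)
      · simp
    have hmul : a * lam = X := by
      ext i k
      rw [Matrix.mul_apply]
      by_cases hk : ∃ j, lam j k ≠ 0
      · obtain ⟨j, hjk⟩ := hk
        rw [Finset.sum_eq_single j]
        · rw [ha_val i j k hjk, inv_mul_cancel_right₀ hjk]
        · intro m _ hm
          have hmk : lam m k = 0 := by
            by_contra hmk
            exact hm (hcol m j k hmk hjk)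
          rw [hmk, mul_zero]
        · simp
      · push_neg at hk
        have hXz : X i k = 0 := by
          by_contra hne
          obtain ⟨j, hj, _⟩ := hXadj i k hne
          exact hj (hk j)
        rw [hXz]
        exact Finset.sum_eq_zero fun m _ => by rw [hk m, mul_zero]
    have haz : ∀ i m : Fin n, (i, m) ∉ Q → a i m = 0 := by
      intro i m hQ
      rw [hadef, Matrix.of_apply]
      refine Finset.sum_eq_zero fun k _ => ?_
      by_cases h : lam m k ≠ 0
      · rw [if_pos h]
        have hXz : X i k = 0 := by
          by_contra hne
          obtain ⟨j, hj, hjQ⟩ := hXadj i k hne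
          have : j = m := hcol j m k hj h
          exact hQ (this ▸ hjQ)
        rw [hXz, zero_mul]
      · rw [if_neg h]
    have hg : (1 + a) ∈ UPg (F := F) Q := by
      constructor
      · intro i
        have : a i i = 0 := haz i i (fun hQ => lt_irrefl i (hup hQ))
        simp [Matrix.add_apply, this, Matrix.one_apply_eq]
      · intro i j hij hQ
        simp [Matrix.add_apply, haz i j hQ, Matrix.one_apply_ne hij]
    exact ⟨1 + a, hg, by rw [add_mul, one_mul, hmul]⟩

lemma Rset_eq {Q : Set (Fin n × Fin n)} (hup : Q ⊆ PosUpper n) (lam : Mat n F)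
    (hrow : ∀ i j j' : Fin n, lam i j ≠ 0 → lam i j' ≠ 0 → j = j')
    (hcol : ∀ i i' j : Fin n, lam i j ≠ 0 → lam i' j ≠ 0 → i = i') :
    {x : Mat n F | ∃ h ∈ UPg (F := F) Q, x = lam * h}
      = (fun X => lam + X) '' {X : Mat n F | msupp X ⊆ adjR Q lam} := by
  ext x
  constructor
  · rintro ⟨h, hh, rfl⟩
    refine ⟨lam * (h - 1), ?_, by show lam + _ = _; rw [mul_sub, mul_one, add_sub_cancel]⟩
    intro p hp
    have hp' : (lam * (h - 1)) p.1 p.2 ≠ 0 := hp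
    rw [Matrix.mul_apply] at hp'
    obtain ⟨j, _, hterm⟩ := Finset.exists_ne_zero_of_sum_ne_zero hp'
    have h1 : lam p.1 j ≠ 0 := left_ne_zero_of_mul hterm
    have h2 : (h - 1) j p.2 ≠ 0 := right_ne_zero_of_mul hterm
    have hQ : (j, p.2) ∈ Q := by
      by_contra hQ
      apply h2
      by_cases he : j = p.2
      · subst he; simp [Matrix.sub_apply, hh.1]
      · simp [Matrix.sub_apply, hh.2 j p.2 he hQ, Matrix.one_apply_ne he]
    exact ⟨j, h1, hQ⟩
  · rintro ⟨Y, hY, rfl⟩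
    simp only [Set.mem_setOf_eq] at hY
    set b : Mat n F :=
      Matrix.of fun j k => ∑ i : Fin n, if lam i j ≠ 0 then (lam i j)⁻¹ * Y i k else 0
      with hbdef
    have hYadj : ∀ i k : Fin n, Y i k ≠ 0 → (i, k) ∈ adjR Q lam := fun i k h => hY h
    have hb_val : ∀ i j k : Fin n, lam i j ≠ 0 → b j k = (lam i j)⁻¹ * Y i k := by
      intro i j k hij
      rw [hbdef, Matrix.of_apply, Finset.sum_eq_single i]
      · rw [if_pos hij]
      · intro i' _ hi'
        rw [if_neg]
        intro h
        exact hi' (hcol i' i j h hij)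
      · simp
    have hmul : lam * b = Y := by
      ext i k
      rw [Matrix.mul_apply]
      by_cases hi : ∃ j, lam i j ≠ 0
      · obtain ⟨j, hij⟩ := hi
        rw [Finset.sum_eq_single j]
        · rw [hb_val i j k hij, mul_inv_cancel_left₀ hij]
        · intro m _ hm
          have hmk : lam i m = 0 := by
            by_contra hmk
            exact hm (hrow i m j hmk hij)
          rw [hmk, zero_mul]
        · simp
      · push_neg at hi
        have hYz : Y i k = 0 := by
          by_contra hne
          obtain ⟨j, hj, _⟩ := hYadj i k hne
          exact hj (hi j)
        rw [hYz]
        exact Finset.sum_eq_zero fun m _ => by rw [hi m, zero_mul]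
    have hbz : ∀ j k : Fin n, (j, k) ∉ Q → b j k = 0 := by
      intro j k hQ
      rw [hbdef, Matrix.of_apply]
      refine Finset.sum_eq_zero fun i _ => ?_
      by_cases h : lam i j ≠ 0
      · rw [if_pos h]
        have hYz : Y i k = 0 := by
          by_contra hne
          obtain ⟨m, hm, hmQ⟩ := hYadj i k hne
          have : m = j := hrow i m j hm h
          exact hQ (this ▸ hmQ)
        rw [hYz, mul_zero]
      · rw [if_neg h]
    have hg : (1 + b) ∈ UPg (F := F) Q := by
      constructor
      · intro i
        have : b i i = 0 := hbz i i (fun hQ => lt_irrefl i (hup hQ))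
        simp [Matrix.add_apply, this, Matrix.one_apply_eq]
      · intro i j hij hQ
        simp [Matrix.add_apply, hbz i j hQ, Matrix.one_apply_ne hij]
    exact ⟨1 + b, hg, by rw [mul_add, mul_one, hmul]⟩

end TwoSidedAux

lemma main_count {n : ℕ} {F : Type*} [Field F] [Fintype F] (Q : Set (Fin n × Fin n))
    (hup : Q ⊆ PosUpper n)
    (htr : ∀ i j k : Fin n, (i, j) ∈ Q → (j, k) ∈ Q → (i, k) ∈ Q)
    (lam : Mat n F)
    (hrow : ∀ i j j' : Fin n, lam i j ≠ 0 → lam i j' ≠ 0 → j = j')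
    (hcol : ∀ i i' j : Fin n, lam i j ≠ 0 → lam i' j ≠ 0 → i = i') :
    Nat.card {x : Mat n F | ∃ g ∈ UPg (F := F) Q, ∃ h ∈ UPg (F := F) Q, x = g * lam * h}
      = Fintype.card F ^ (adjF Q lam).ncard := by
  classical
  set q := Fintype.card F with hq
  set O : Set (Mat n F) :=
    {x | ∃ g ∈ UPg (F := F) Q, ∃ h ∈ UPg (F := F) Q, x = g * lam * h} with hO
  set L : Set (Mat n F) := {x | ∃ g ∈ UPg (F := F) Q, x = g * lam} with hL
  set R : Set (Mat n F) := {x | ∃ h ∈ UPg (F := F) Q, x = lam * h} with hR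
  set cf : Mat n F → Set (Mat n F) := fun x => {y | ∃ u ∈ UPg (F := F) Q, y = u * x} with hcf
  have hW1 : (1 : Mat n F) ∈ UPg (F := F) Q := UPg_one
  have hWinv : ∀ g ∈ UPg (F := F) Q, ∃ g' ∈ UPg (F := F) Q, g * g' = 1 ∧ g' * g = 1 :=
    fun g hg => UPg_inv hup htr hg
  have hrinj : ∀ v ∈ UPg (F := F) Q, Function.Injective (fun x : Mat n F => x * v) := by
    intro v hv
    obtain ⟨v', hv', h1, h2⟩ := hWinv v hv
    intro x y hxy
    have := congrArg (fun z => z * v') hxy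
    simpa [mul_assoc, h1] using this
  -- cardinalities of L, R, L ∩ R
  have hLcard : L.ncard = q ^ (adjL Q lam).ncard := by
    rw [hL, Lset_eq hup lam hrow hcol,
      Set.ncard_image_of_injective _ (add_right_injective lam), card_supported]
  have hRcard : R.ncard = q ^ (adjR Q lam).ncard := by
    rw [hR, Rset_eq hup lam hrow hcol,
      Set.ncard_image_of_injective _ (add_right_injective lam), card_supported]
  have hIcard : (L ∩ R).ncard = q ^ (adjL Q lam ∩ adjR Q lam).ncard := by
    rw [hL, hR, Lset_eq hup lam hrow hcol, Rset_eq hup lam hrow hcol,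
      ← Set.image_inter (add_right_injective lam),
      Set.ncard_image_of_injective _ (add_right_injective lam)]
    have hss : {X : Mat n F | msupp X ⊆ adjL Q lam} ∩ {X : Mat n F | msupp X ⊆ adjR Q lam}
        = {X : Mat n F | msupp X ⊆ adjL Q lam ∩ adjR Q lam} := by
      ext X
      simp only [Set.mem_inter_iff, Set.mem_setOf_eq, Set.subset_inter_iff]
    rw [hss, card_supported]
  -- facts about classes
  have hc1 : ∀ x : Mat n F, x ∈ cf x := fun x => ⟨1, hW1, (one_mul x).symm⟩
  have hc2 : ∀ x y : Mat n F, y ∈ cf x → cf y = cf x := by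
    rintro x y ⟨u, hu, rfl⟩
    obtain ⟨u', hu', hu1, hu2⟩ := hWinv u hu
    ext z
    constructor
    · rintro ⟨w, hw, rfl⟩
      exact ⟨w * u, UPg_mul hup htr hw hu, (mul_assoc w u x).symm⟩
    · rintro ⟨w, hw, rfl⟩
      refine ⟨w * u', UPg_mul hup htr hw hu', ?_⟩
      rw [mul_assoc, ← mul_assoc u', hu2, one_mul]
  have hc3 : ∀ x ∈ O, cf x ⊆ O := by
    rintro x ⟨g, hg, h, hh, rfl⟩ z ⟨u, hu, rfl⟩
    exact ⟨u * g, UPg_mul hup htr hu hg, h, hh, by simp [mul_assoc]⟩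
  have hc4 : ∀ x ∈ O, ∃ v ∈ UPg (F := F) Q, lam * v ∈ cf x ∧ cf x = cf (lam * v) := by
    rintro x ⟨g, hg, h, hh, rfl⟩
    obtain ⟨g', hg', h1, h2⟩ := hWinv g hg
    have hmem : lam * h ∈ cf (g * lam * h) :=
      ⟨g', hg', by rw [← mul_assoc, ← mul_assoc, h2, one_mul]⟩
    exact ⟨h, hh, hmem, (hc2 _ _ hmem).symm⟩
  have hc5 : ∀ v ∈ UPg (F := F) Q, cf (lam * v) = (fun x => x * v) '' L := by
    intro v hv
    ext z
    constructor
    · rintro ⟨u, hu, rfl⟩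
      exact ⟨u * lam, ⟨u, hu, rfl⟩, by show u * lam * v = u * (lam * v); rw [mul_assoc]⟩
    · rintro ⟨w, ⟨u, hu, rfl⟩, rfl⟩
      exact ⟨u, hu, by show u * lam * v = u * (lam * v); rw [mul_assoc]⟩
  have hc6 : ∀ v ∈ UPg (F := F) Q, R ∩ cf (lam * v) = (fun x => x * v) '' (L ∩ R) := by
    intro v hv
    obtain ⟨v', hv', h1, h2⟩ := hWinv v hv
    ext z
    constructor
    · rintro ⟨⟨h, hh, rfl⟩, ⟨u, hu, hz⟩⟩
      refine ⟨lam * h * v', ⟨⟨u, hu, ?_⟩, ⟨h * v', UPg_mul hup htr hh hv', by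
        rw [mul_assoc]⟩⟩, ?_⟩
      · rw [hz, mul_assoc u, mul_assoc, h1, mul_one]
      · show lam * h * v' * v = lam * h
        rw [mul_assoc, h2, mul_one]
    · rintro ⟨w, ⟨⟨u, hu, rfl⟩, ⟨h, hh, hw⟩⟩, rfl⟩
      constructor
      · exact ⟨h * v, UPg_mul hup htr hh hv, by
          show u * lam * v = lam * (h * v)
          rw [hw, mul_assoc]⟩
      · exact ⟨u, hu, by show u * lam * v = u * (lam * v); rw [mul_assoc]⟩
  have hcfcard : ∀ v ∈ UPg (F := F) Q, (cf (lam * v)).ncard = L.ncard := fun v hv => by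
    rw [hc5 v hv, Set.ncard_image_of_injective _ (hrinj v hv)]
  have hRIcard : ∀ v ∈ UPg (F := F) Q, (R ∩ cf (lam * v)).ncard = (L ∩ R).ncard :=
    fun v hv => by rw [hc6 v hv, Set.ncard_image_of_injective _ (hrinj v hv)]
  -- Finset counting
  set T : Finset (Set (Mat n F)) := O.toFinset.image cf with hT
  have hOcount : O.toFinset.card = T.card * L.ncard := by
    calc O.toFinset.card
        = ∑ t ∈ T, (O.toFinset.filter (fun y => cf y = t)).card :=
          Finset.card_eq_sum_card_fiberwise (fun x hx => Finset.mem_image_of_mem cf hx)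
      _ = ∑ _t ∈ T, L.ncard := by
          refine Finset.sum_congr rfl fun t ht => ?_
          obtain ⟨x₀, hx₀, rfl⟩ := Finset.mem_image.mp ht
          have hx₀O : x₀ ∈ O := Set.mem_toFinset.mp hx₀
          have hfib : O.toFinset.filter (fun y => cf y = cf x₀) = (cf x₀).toFinset := by
            ext y
            simp only [Finset.mem_filter, Set.mem_toFinset]
            constructor
            · rintro ⟨hyO, hy⟩
              rw [← hy]; exact hc1 y
            · intro hy
              exact ⟨hc3 x₀ hx₀O hy, hc2 _ _ hy⟩
          rw [hfib, ← Set.ncard_eq_toFinset_card']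
          obtain ⟨v, hv, _, hveq⟩ := hc4 x₀ hx₀O
          rw [hveq, hcfcard v hv]
      _ = T.card * L.ncard := by rw [Finset.sum_const, smul_eq_mul]
  have hRT : R.toFinset.image cf = T := by
    ext t
    simp only [Finset.mem_image, Set.mem_toFinset, hT]
    constructor
    · rintro ⟨y, hy, rfl⟩
      have hyO : y ∈ O := by
        obtain ⟨h, hh, rfl⟩ := hy
        exact ⟨1, hW1, h, hh, by rw [one_mul]⟩
      exact ⟨y, hyO, rfl⟩
    · rintro ⟨x, hx, rfl⟩
      obtain ⟨v, hv, _, hveq⟩ := hc4 x hx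
      exact ⟨lam * v, ⟨v, hv, rfl⟩, hveq.symm⟩
  have hRcount : R.toFinset.card = T.card * (L ∩ R).ncard := by
    calc R.toFinset.card
        = ∑ t ∈ T, (R.toFinset.filter (fun y => cf y = t)).card :=
          Finset.card_eq_sum_card_fiberwise (fun x hx => by
            rw [← hRT]; exact Finset.mem_image_of_mem cf hx)
      _ = ∑ _t ∈ T, (L ∩ R).ncard := by
          refine Finset.sum_congr rfl fun t ht => ?_
          obtain ⟨x₀, hx₀, rfl⟩ := Finset.mem_image.mp ht
          have hx₀O : x₀ ∈ O := Set.mem_toFinset.mp hx₀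
          obtain ⟨v, hv, hvmem, hveq⟩ := hc4 x₀ hx₀O
          have hfib : R.toFinset.filter (fun y => cf y = cf x₀)
              = (R ∩ cf (lam * v)).toFinset := by
            ext y
            simp only [Finset.mem_filter, Set.mem_toFinset, Set.mem_inter_iff]
            constructor
            · rintro ⟨hyR, hy⟩
              refine ⟨hyR, ?_⟩
              rw [hveq] at hy
              rw [← hy]; exact hc1 y
            · rintro ⟨hyR, hy⟩
              exact ⟨hyR, by rw [hc2 _ _ hy, ← hveq]⟩
          rw [hfib, ← Set.ncard_eq_toFinset_card', hRIcard v hv]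
      _ = T.card * (L ∩ R).ncard := by rw [Finset.sum_const, smul_eq_mul]
  -- final arithmetic
  have hkey : O.ncard * (L ∩ R).ncard = L.ncard * R.ncard := by
    rw [Set.ncard_eq_toFinset_card' O, hOcount, Set.ncard_eq_toFinset_card' R, hRcount]
    ring
  rw [hLcard, hRcard, hIcard] at hkey
  have hunion : (adjF Q lam).ncard + (adjL Q lam ∩ adjR Q lam).ncard
      = (adjL Q lam).ncard + (adjR Q lam).ncard := by
    have : adjF Q lam = adjL Q lam ∪ adjR Q lam := rfl
    rw [this]
    exact Set.ncard_union_add_ncard_inter _ _ (Set.toFinite _) (Set.toFinite _)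
  have hqpos : 0 < q ^ (adjL Q lam ∩ adjR Q lam).ncard :=
    pow_pos Fintype.card_pos _
  have hfin : O.ncard * q ^ (adjL Q lam ∩ adjR Q lam).ncard
      = q ^ (adjF Q lam).ncard * q ^ (adjL Q lam ∩ adjR Q lam).ncard := by
    rw [hkey, ← pow_add, ← pow_add, hunion]
  rw [Nat.card_coe_set_eq]
  exact Nat.eq_of_mul_eq_mul_right hqpos hfin

/-- The two-sided orbit `U_Q λ U_Q` has cardinality `q^{|adj_Q(λ)|}`. -/
theorem two_sided_orbit_card {n : ℕ} {F : Type*} [Field F] [Fintype F]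
    (P Q : Set (Fin n × Fin n)) (hP : IsPoset P) (hN : NormalPoset P)
    (hQ : Q = P ∨ Q = PosUpper n) (lam : Mat n F) (hlam : lam ∈ SPa P) :
    Nat.card {x : Mat n F | ∃ g ∈ UPg (F := F) Q, ∃ h ∈ UPg (F := F) Q,
        x = g * lam * h} = Fintype.card F ^ (adjF Q lam).ncard := by
  have hup : Q ⊆ PosUpper n := by
    rcases hQ with rfl | rfl
    · exact hP.1
    · exact subset_rfl
  have htr : ∀ i j k : Fin n, (i, j) ∈ Q → (j, k) ∈ Q → (i, k) ∈ Q := by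
    rcases hQ with rfl | rfl
    · exact hP.2
    · intro i j k h1 h2
      simp only [PosUpper, Set.mem_setOf_eq] at h1 h2 ⊢
      exact lt_trans h1 h2
  exact main_count Q hup htr lam hlam.2.1 hlam.2.2
end

section
/- Let P ⊆ [[n]] be a poset normal in [[n]] and λ ∈ S_P. Define for X, Y ∈ n_P the product (X *_λ Y)_{il} = X_{il} + Y_{il} + Σ_{i<j<k<l, (j,k) ∈ supp(λ)} X_{ik} Y_{jl} (λ_{jk})^{-1}. If X = gλ − λ and Y = λh − λ for g, h ∈ U_n, then X *_λ Y = gλh − λ. -/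
open scoped Classical

/-- The product `X *_λ Y` on `n_P`. -/
noncomputable def starProdL {n : ℕ} {F : Type*} [Field F] (lam X Y : Mat n F) : Mat n F :=
  Matrix.of fun i l =>
    X i l + Y i l + ∑ j : Fin n, ∑ k : Fin n,
      if i < j ∧ j < k ∧ k < l ∧ lam j k ≠ 0 then X i k * Y j l * (lam j k)⁻¹ else 0

/-- If `X = gλ − λ` and `Y = λh − λ` then `X *_λ Y = gλh − λ`. -/
theorem starProdL_eq {n : ℕ} {F : Type*} [Field F]
    (P : Set (Fin n × Fin n)) (hP : IsPoset P) (hN : NormalPoset P)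
    (lam : Mat n F) (hlam : lam ∈ SPa P)
    (g h : Mat n F) (hg : g ∈ UPg (F := F) (PosUpper n)) (hh : h ∈ UPg (F := F) (PosUpper n))
    (X Y : Mat n F) (hX : X = g * lam - lam) (hY : Y = lam * h - lam) :
    starProdL lam X Y = g * lam * h - lam := by
  obtain ⟨hlam1, hlamr, hlamc⟩ := hlam
  have hlt : ∀ a b : Fin n, lam a b ≠ 0 → a < b := by
    intro a b hab
    by_contra hnab
    exact hab (hlam1 a b (fun hmem => hnab (hP.1 hmem)))
  subst hX hY
  ext i l
  simp only [starProdL, Matrix.of_apply, Matrix.sub_apply]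
  have key : ∀ j k : Fin n,
      (if i < j ∧ j < k ∧ k < l ∧ lam j k ≠ 0 then
        ((g * lam) i k - lam i k) * ((lam * h) j l - lam j l) * (lam j k)⁻¹ else 0)
      = (if i < j ∧ j < k ∧ k < l ∧ lam j k ≠ 0 then g i j * lam j k * h k l else 0) := by
    intro j k
    by_cases hc : i < j ∧ j < k ∧ k < l ∧ lam j k ≠ 0
    · obtain ⟨hij, hjk, hkl, hne⟩ := hc
      simp only [hij, hjk, hkl, hne, and_true, if_true, not_false_iff, Ne, true_and]
      have h1 : lam i k = 0 := by
        by_contra h0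
        exact hij.ne (hlamc i j k h0 hne)
      have h2 : (g * lam) i k = g i j * lam j k := by
        rw [Matrix.mul_apply]
        apply Finset.sum_eq_single j
        · intro b _ hb
          have : lam b k = 0 := by
            by_contra h0
            exact hb (hlamc b j k h0 hne)
          rw [this, mul_zero]
        · intro hj; exact absurd (Finset.mem_univ j) hj
      have h3 : lam j l = 0 := by
        by_contra h0
        exact hkl.ne (hlamr j k l hne h0)
      have h4 : (lam * h) j l = lam j k * h k l := by
        rw [Matrix.mul_apply]
        apply Finset.sum_eq_single k
        · intro b _ hb
          have : lam j b = 0 := by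
            by_contra h0
            exact hb (hlamr j b k h0 hne)
          rw [this, zero_mul]
        · intro hk; exact absurd (Finset.mem_univ k) hk
      rw [h1, h2, h3, h4, sub_zero, sub_zero]
      field_simp
    · simp only [hc, if_false]
  rw [Finset.sum_congr rfl (fun j _ => Finset.sum_congr rfl (fun k _ => key j k))]
  have e1 : ∀ a b : Fin n, g i a * lam a b * h b l
      = (if b = l then g i a * lam a l else 0)
      + (if a = i then lam i b * h b l else 0)
      - (if a = i ∧ b = l then lam i l else 0)
      + (if i < a ∧ a < b ∧ b < l ∧ lam a b ≠ 0 then g i a * lam a b * h b l else 0) := by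
    intro a b
    rcases eq_or_ne a i with ha | ha
    · subst ha
      rcases eq_or_ne b l with hb | hb
      · subst hb
        simp [hg.1, hh.1, lt_irrefl]
      · simp [hb, hg.1, lt_irrefl]
    · rcases eq_or_ne b l with hb | hb
      · subst hb
        simp only [ha, and_false, false_and, if_false, if_true, lt_irrefl, and_true]
        simp [hh.1, ha, lt_irrefl]
      · simp only [ha, hb, and_false, false_and, if_false, add_zero, sub_zero, zero_add]
        by_cases hcond : i < a ∧ a < b ∧ b < l ∧ lam a b ≠ 0
        · rw [if_pos hcond]
        · rw [if_neg hcond]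
          push_neg at hcond
          by_cases h1 : i < a
          · by_cases h2 : a < b
            · by_cases h3 : b < l
              · rw [hcond h1 h2 h3, mul_zero, zero_mul]
              · rw [hh.2 b l hb (fun hm => h3 hm), mul_zero]
            · have : lam a b = 0 := by
                by_contra h0
                exact h2 (hlt a b h0)
              rw [this, mul_zero, zero_mul]
          · rw [hg.2 i a (Ne.symm ha) (fun hm => h1 hm), zero_mul, zero_mul]
  have main : ∑ a : Fin n, ∑ b : Fin n, g i a * lam a b * h b l
      = (∑ a : Fin n, g i a * lam a l) + (∑ b : Fin n, lam i b * h b l) - lam i l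
        + ∑ a : Fin n, ∑ b : Fin n,
            (if i < a ∧ a < b ∧ b < l ∧ lam a b ≠ 0 then g i a * lam a b * h b l else 0) := by
    have s1 : ∑ a : Fin n, ∑ b : Fin n, (if b = l then g i a * lam a l else 0)
        = ∑ a : Fin n, g i a * lam a l := by
      apply Finset.sum_congr rfl
      intro a _
      simp
    have s2 : ∑ a : Fin n, ∑ b : Fin n, (if a = i then lam i b * h b l else 0)
        = ∑ b : Fin n, lam i b * h b l := by
      rw [Finset.sum_comm]
      apply Finset.sum_congr rfl
      intro b _
      simp
    have s3 : ∑ a : Fin n, ∑ b : Fin n, (if a = i ∧ b = l then lam i l else 0)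
        = lam i l := by
      simp [ite_and]
    rw [Finset.sum_congr rfl (fun a _ => Finset.sum_congr rfl (fun b _ => e1 a b))]
    simp only [Finset.sum_add_distrib, Finset.sum_sub_distrib]
    rw [s1, s2, s3]
  have hrhs : (g * lam * h) i l = ∑ a : Fin n, ∑ b : Fin n, g i a * lam a b * h b l := by
    rw [Matrix.mul_apply]
    rw [Finset.sum_comm]
    apply Finset.sum_congr rfl
    intro a _
    rw [Matrix.mul_apply, Finset.sum_mul]
  rw [hrhs, main, Matrix.mul_apply, Matrix.mul_apply]
  ring
end

section
/- Let P ⊆ [[n]] be a poset normal in [[n]] and λ ∈ S_P. Every left U_n-orbit in n_P decomposes as a disjoint union of left U_P-orbits all of the same cardinality; in particular, the number of left U_P-orbits contained in the left orbit U_n λ equals q^{|aux^L_P(λ)|}, where aux^L_P(λ) = adj^L_{[[n]]}(λ) \ adj^L_P(λ). -/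
open scoped Classical

section OrbitHelpers

variable {n : ℕ} {F : Type*} [Field F]

lemma nPa_zero (S : Set (Fin n × Fin n)) : (0 : Mat n F) ∈ nPa S := by
  intro i j _; simp

lemma nPa_add {S : Set (Fin n × Fin n)} {a b : Mat n F} (ha : a ∈ nPa S) (hb : b ∈ nPa S) :
    a + b ∈ nPa S := by
  intro i j h; simp [Matrix.add_apply, ha i j h, hb i j h]

lemma nPa_sub {S : Set (Fin n × Fin n)} {a b : Mat n F} (ha : a ∈ nPa S) (hb : b ∈ nPa S) :
    a - b ∈ nPa S := by
  intro i j h; simp [Matrix.sub_apply, ha i j h, hb i j h]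

lemma nPa_mono {S T : Set (Fin n × Fin n)} (h : S ⊆ T) :
    (nPa S : Set (Mat n F)) ⊆ nPa T :=
  fun _X hX i j hij => hX i j (fun c => hij (h c))

lemma ne_zero_mem {S : Set (Fin n × Fin n)} {a : Mat n F} (ha : a ∈ nPa S) {i j : Fin n}
    (h : a i j ≠ 0) : (i, j) ∈ S := by
  by_contra hc; exact h (ha i j hc)

lemma nPa_mul_left {S : Set (Fin n × Fin n)}
    (hS : ∀ i j k : Fin n, i < j → (j, k) ∈ S → (i, k) ∈ S)
    {a v : Mat n F} (ha : a ∈ nPa (PosUpper n)) (hv : v ∈ nPa S) : a * v ∈ nPa S := by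
  intro i k hik
  rw [Matrix.mul_apply]
  refine Finset.sum_eq_zero fun j _ => ?_
  rcases eq_or_ne (a i j) 0 with h1 | h1
  · rw [h1, zero_mul]
  rcases eq_or_ne (v j k) 0 with h2 | h2
  · rw [h2, mul_zero]
  exact absurd (hS i j k (ne_zero_mem ha h1) (ne_zero_mem hv h2)) hik

lemma nPa_mul_right {S : Set (Fin n × Fin n)}
    (hS : ∀ j k l : Fin n, (j, k) ∈ S → k < l → (j, l) ∈ S)
    {v a : Mat n F} (hv : v ∈ nPa S) (ha : a ∈ nPa (PosUpper n)) : v * a ∈ nPa S := by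
  intro j l hjl
  rw [Matrix.mul_apply]
  refine Finset.sum_eq_zero fun k _ => ?_
  rcases eq_or_ne (v j k) 0 with h1 | h1
  · rw [h1, zero_mul]
  rcases eq_or_ne (a k l) 0 with h2 | h2
  · rw [h2, mul_zero]
  exact absurd (hS j k l (ne_zero_mem hv h1) (ne_zero_mem ha h2)) hjl

lemma sub_one_mem_nPa {Q : Set (Fin n × Fin n)} {g : Mat n F} (hg : g ∈ UPg Q) :
    g - 1 ∈ nPa Q := by
  intro i j h
  rcases eq_or_ne i j with rfl | hij
  · simp [Matrix.sub_apply, hg.1 i]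
  · simp [Matrix.sub_apply, hg.2 i j hij h, Matrix.one_apply_ne hij]

lemma pow_entry {a : Mat n F} (ha : a ∈ nPa (PosUpper n)) :
    ∀ (m : ℕ) (i j : Fin n), (a ^ m) i j ≠ 0 → (i : ℕ) + m ≤ (j : ℕ) := by
  intro m
  induction m with
  | zero =>
    intro i j h
    rw [pow_zero] at h
    rcases eq_or_ne i j with rfl | hij
    · omega
    · exact absurd (Matrix.one_apply_ne hij) h
  | succ m ih =>
    intro i j h
    rw [pow_succ, Matrix.mul_apply] at h
    obtain ⟨k, _, hk⟩ := Finset.exists_ne_zero_of_sum_ne_zero h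
    have h1 : (a ^ m) i k ≠ 0 := fun hc => hk (by rw [hc, zero_mul])
    have h2 : a k j ≠ 0 := fun hc => hk (by rw [hc, mul_zero])
    have e1 := ih i k h1
    have e2 : (k : ℕ) < (j : ℕ) := ne_zero_mem ha h2
    omega

lemma exists_inv {g : Mat n F} (hg : g ∈ UPg (PosUpper n)) :
    ∃ g' ∈ UPg (PosUpper n), g * g' = 1 ∧ g' * g = 1 := by
  have hy : (1 - g : Mat n F) ∈ nPa (PosUpper n) := by
    intro i j h
    rcases eq_or_ne i j with rfl | hij
    · simp [Matrix.sub_apply, hg.1 i]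
    · simp [Matrix.sub_apply, hg.2 i j hij h, Matrix.one_apply_ne hij]
  have hyn : (1 - g : Mat n F) ^ n = 0 := by
    ext i j
    have hj := j.isLt
    by_contra h
    have := pow_entry hy n i j h
    omega
  refine ⟨∑ m ∈ Finset.range n, (1 - g) ^ m, ⟨?_, ?_⟩, ?_, ?_⟩
  · intro i
    rw [Matrix.sum_apply]
    rw [Finset.sum_eq_single 0]
    · simp
    · intro m _ hm
      by_contra h
      have := pow_entry hy m i i h
      omega
    · intro h0
      exact absurd (Finset.mem_range.mpr i.pos) h0
  · intro i j hij hnot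
    rw [Matrix.sum_apply]
    refine Finset.sum_eq_zero fun m _ => ?_
    rcases Nat.eq_zero_or_pos m with rfl | hm
    · simp [Matrix.one_apply_ne hij]
    · by_contra h
      have := pow_entry hy m i j h
      exact hnot (show (i : ℕ) < (j : ℕ) by omega)
  · have h1 := mul_geom_sum (1 - g : Mat n F) n
    rw [hyn, sub_sub_cancel_left, neg_mul, zero_sub, neg_inj] at h1
    exact h1
  · have h1 := geom_sum_mul (1 - g : Mat n F) n
    rw [hyn, sub_sub_cancel_left, mul_neg, zero_sub, neg_inj] at h1
    exact h1

end OrbitHelpers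
section OrbitLemmas

variable {n : ℕ} {F : Type*} [Field F]

lemma conj_mem {P : Set (Fin n × Fin n)} (hP : IsPoset P) (hN : NormalPoset P)
    {g g' h : Mat n F} (hg : g ∈ UPg (PosUpper n)) (hg' : g' ∈ UPg (PosUpper n))
    (hgg' : g * g' = 1) (hh : h ∈ UPg P) : g * h * g' ∈ UPg P := by
  have hSL : ∀ i j k : Fin n, i < j → (j, k) ∈ P → (i, k) ∈ P := by
    intro i j k hij hjk
    by_contra hc
    exact hN i j k k (le_of_lt hij) (hP.1 hjk) le_rfl hc hjk
  have hSR : ∀ j k l : Fin n, (j, k) ∈ P → k < l → (j, l) ∈ P := by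
    intro j k l hjk hkl
    by_contra hc
    exact hN j j k l le_rfl (hP.1 hjk) (le_of_lt hkl) hc hjk
  have hy : h - 1 ∈ nPa P := sub_one_mem_nPa hh
  have hx : g - 1 ∈ nPa (PosUpper n) := sub_one_mem_nPa hg
  have hx' : g' - 1 ∈ nPa (PosUpper n) := sub_one_mem_nPa hg'
  have hgy : g * (h - 1) ∈ nPa P := by
    have e : g * (h - 1) = (h - 1) + (g - 1) * (h - 1) := by noncomm_ring
    rw [e]
    exact nPa_add hy (nPa_mul_left hSL hx hy)
  have hz : g * (h - 1) * g' ∈ nPa P := by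
    have e : g * (h - 1) * g' = g * (h - 1) + (g * (h - 1)) * (g' - 1) := by noncomm_ring
    rw [e]
    exact nPa_add hgy (nPa_mul_right hSR hgy hx')
  have heq : g * h * g' = 1 + g * (h - 1) * g' := by
    have e2 : g * h * g' = g * (h - 1) * g' + g * g' := by noncomm_ring
    rw [e2, hgg', add_comm]
  rw [heq]
  refine ⟨fun i => ?_, fun i j hij hnot => ?_⟩
  · have hzi : (g * (h - 1) * g') i i = 0 :=
      hz i i (fun c => absurd (hP.1 c) (lt_irrefl i))
    simp [Matrix.add_apply, hzi]
  · simp [Matrix.add_apply, Matrix.one_apply_ne hij, hz i j hnot]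

lemma orbit_eq {P : Set (Fin n × Fin n)} {lam : Mat n F} (hlam : lam ∈ SPa P)
    {Q : Set (Fin n × Fin n)} (hQ : Q ⊆ PosUpper n) :
    {y : Mat n F | ∃ g ∈ UPg Q, y = g * lam} =
      {y : Mat n F | ∃ m ∈ nPa (adjL Q lam), y = lam + m} := by
  ext y
  simp only [Set.mem_setOf_eq]
  constructor
  · rintro ⟨g, hg, rfl⟩
    have hx : g - 1 ∈ nPa Q := sub_one_mem_nPa hg
    refine ⟨(g - 1) * lam, ?_, by noncomm_ring⟩
    intro i k hik
    rw [Matrix.mul_apply]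
    refine Finset.sum_eq_zero fun j _ => ?_
    rcases eq_or_ne ((g - 1) i j) 0 with h1 | h1
    · rw [h1, zero_mul]
    rcases eq_or_ne (lam j k) 0 with h2 | h2
    · rw [h2, mul_zero]
    exact absurd ⟨j, h2, ne_zero_mem hx h1⟩ hik
  · rintro ⟨m, hm, rfl⟩
    set x : Mat n F := Matrix.of fun i j =>
      if (i, j) ∈ Q then (∑ k, if lam j k = 0 then 0 else m i k * (lam j k)⁻¹) else 0 with hx_def
    have hxe : ∀ i j, x i j =
        if (i, j) ∈ Q then (∑ k, if lam j k = 0 then 0 else m i k * (lam j k)⁻¹) else 0 :=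
      fun _ _ => rfl
    refine ⟨1 + x, ⟨fun i => ?_, fun i j hij hnot => ?_⟩, ?_⟩
    · have hiq : (i, i) ∉ Q := fun c => absurd (hQ c) (lt_irrefl i)
      simp [Matrix.add_apply, hxe, hiq]
    · simp [Matrix.add_apply, Matrix.one_apply_ne hij, hxe, hnot]
    · have hxl : x * lam = m := by
        ext i k
        rw [Matrix.mul_apply]
        by_cases hex : ∃ j₀, lam j₀ k ≠ 0
        · obtain ⟨j₀, hj₀⟩ := hex
          have hsum : (∑ j, x i j * lam j k) = x i j₀ * lam j₀ k := by
            refine Finset.sum_eq_single j₀ (fun j _ hne => ?_)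
              (fun hc => absurd (Finset.mem_univ j₀) hc)
            rcases eq_or_ne (lam j k) 0 with h0 | h0
            · rw [h0, mul_zero]
            · exact absurd (hlam.2.2 j j₀ k h0 hj₀) hne
          rw [hsum]
          rcases Classical.em ((i, j₀) ∈ Q) with hiq | hiq
          · rw [hxe, if_pos hiq]
            have hsum2 : (∑ k' : Fin n, if lam j₀ k' = 0 then 0 else m i k' * (lam j₀ k')⁻¹)
                = m i k * (lam j₀ k)⁻¹ := by
              rw [Finset.sum_eq_single k (fun k' _ hne => by
                    rcases eq_or_ne (lam j₀ k') 0 with h0 | h0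
                    · rw [if_pos h0]
                    · exact absurd (hlam.2.1 j₀ k' k h0 hj₀) hne)
                  (fun hc => absurd (Finset.mem_univ k) hc), if_neg hj₀]
            rw [hsum2, mul_assoc, inv_mul_cancel₀ hj₀, mul_one]
          · rw [hxe, if_neg hiq, zero_mul]
            refine ((hm i k fun hc => ?_)).symm
            obtain ⟨j, hj1, hj2⟩ := hc
            have hjj : j = j₀ := hlam.2.2 j j₀ k hj1 hj₀
            exact hiq (by rwa [hjj] at hj2)
        · push_neg at hex
          have hmz : m i k = 0 := hm i k (fun hc => by
            obtain ⟨j, hj1, _⟩ := hc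
            exact hj1 (hex j))
          rw [hmz]
          exact Finset.sum_eq_zero fun j _ => by rw [hex j, mul_zero]
      rw [add_mul, one_mul, hxl]

lemma orbit_coset {P : Set (Fin n × Fin n)} (hP : IsPoset P) (hN : NormalPoset P)
    {lam : Mat n F} (hlam : lam ∈ SPa P) {g : Mat n F} (hg : g ∈ UPg (PosUpper n)) :
    {y : Mat n F | ∃ h ∈ UPg P, y = h * (g * lam)} =
      {y : Mat n F | ∃ v ∈ nPa (adjL P lam), y = g * lam + v} := by
  obtain ⟨g', hg', hgg', hg'g⟩ := exists_inv hg
  have hSB : ∀ i j k : Fin n, i < j → (j, k) ∈ adjL P lam → (i, k) ∈ adjL P lam := by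
    rintro i j k hij ⟨j₀, hj₀, hjj₀⟩
    refine ⟨j₀, hj₀, ?_⟩
    by_contra hc
    exact hN i j j₀ j₀ (le_of_lt hij) (hP.1 hjj₀) le_rfl hc hjj₀
  have horb := orbit_eq hlam hP.1
  have hmul : ∀ {u : Mat n F}, u ∈ UPg (PosUpper n) → ∀ {v : Mat n F},
      v ∈ nPa (adjL P lam) → u * v ∈ nPa (adjL P lam) := by
    intro u hu v hv
    have e : u * v = v + (u - 1) * v := by noncomm_ring
    rw [e]
    exact nPa_add hv (nPa_mul_left hSB (sub_one_mem_nPa hu) hv)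
  ext y
  simp only [Set.mem_setOf_eq]
  constructor
  · rintro ⟨h, hh, rfl⟩
    have hconj : g' * h * g ∈ UPg P := conj_mem hP hN hg' hg hg'g hh
    have hmem : (g' * h * g) * lam ∈ {y : Mat n F | ∃ g ∈ UPg P, y = g * lam} :=
      ⟨_, hconj, rfl⟩
    rw [horb] at hmem
    obtain ⟨w, hw, hweq⟩ := hmem
    refine ⟨g * w, hmul hg hw, ?_⟩
    have e : h * (g * lam) = g * ((g' * h * g) * lam) := by
      simp only [← mul_assoc, hgg', one_mul]
    rw [e, hweq, mul_add]
  · rintro ⟨v, hv, rfl⟩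
    have h2 : lam + g' * v ∈ {y : Mat n F | ∃ m ∈ nPa (adjL P lam), y = lam + m} :=
      ⟨g' * v, hmul hg' hv, rfl⟩
    rw [← horb] at h2
    obtain ⟨h, hh, hheq⟩ := h2
    refine ⟨g * h * g', conj_mem hP hN hg hg' hgg' hh, ?_⟩
    have key : (g * h * g') * (g * lam) = g * (h * lam) := by
      rw [← mul_assoc, mul_assoc (g * h) g' g, hg'g, mul_one, mul_assoc]
    rw [← hheq, mul_add, ← mul_assoc g g' v, hgg', one_mul] at key
    exact key.symm

end OrbitLemmas
section CardLemmas

variable {n : ℕ} {F : Type*} [Field F]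

lemma card_nPa [Fintype F] (S : Set (Fin n × Fin n)) :
    Nat.card (nPa S : Set (Mat n F)) = Fintype.card F ^ S.ncard := by
  have e : (nPa S : Set (Mat n F)) ≃ (S → F) :=
    { toFun := fun X p => (X : Mat n F) p.1.1 p.1.2
      invFun := fun f => ⟨Matrix.of fun i j => if h : (i, j) ∈ S then f ⟨(i, j), h⟩ else 0,
        fun i j hij => dif_neg hij⟩
      left_inv := by
        rintro ⟨X, hX⟩
        apply Subtype.ext
        ext i j
        show (if h : (i, j) ∈ S then X (i, j).1 (i, j).2 else 0) = X i j
        by_cases h : (i, j) ∈ S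
        · rw [dif_pos h]
        · rw [dif_neg h, hX i j h]
      right_inv := by
        intro f
        funext p
        obtain ⟨⟨i, j⟩, hp⟩ := p
        show (if h : (i, j) ∈ S then f ⟨(i, j), h⟩ else 0) = f ⟨(i, j), hp⟩
        rw [dif_pos hp] }
  rw [Nat.card_congr e, Nat.card_fun, Nat.card_eq_fintype_card, Nat.card_coe_set_eq]

lemma coset_image (c : Mat n F) (T : Set (Mat n F)) :
    {y : Mat n F | ∃ v ∈ T, y = c + v} = (fun v => c + v) '' T := by
  ext y
  simp only [Set.mem_setOf_eq, Set.mem_image]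
  constructor
  · rintro ⟨v, hv, rfl⟩; exact ⟨v, hv, rfl⟩
  · rintro ⟨v, hv, rfl⟩; exact ⟨v, hv, rfl⟩

lemma card_coset (c : Mat n F) (T : Set (Mat n F)) :
    Nat.card {y : Mat n F | ∃ v ∈ T, y = c + v} = Nat.card T := by
  rw [coset_image]
  exact Nat.card_image_of_injective (add_right_injective c) T

end CardLemmas
/-- The left `U_n`-orbit of `λ` decomposes into left `U_P`-orbits of
equal cardinality, and the number of such orbits is `q^{|aux^L_P(λ)|}`. -/
theorem left_orbit_decomposition {n : ℕ} {F : Type*} [Field F] [Fintype F]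
    (P : Set (Fin n × Fin n)) (hP : IsPoset P) (hN : NormalPoset P)
    (lam : Mat n F) (hlam : lam ∈ SPa P) :
    (∀ x : Mat n F, (∃ g ∈ UPg (F := F) (PosUpper n), x = g * lam) →
      Nat.card {y : Mat n F | ∃ g ∈ UPg (F := F) P, y = g * x} =
        Nat.card {y : Mat n F | ∃ g ∈ UPg (F := F) P, y = g * lam}) ∧
    Nat.card {O : Set (Mat n F) | ∃ x : Mat n F,
        (∃ g ∈ UPg (F := F) (PosUpper n), x = g * lam) ∧
        O = {y : Mat n F | ∃ g ∈ UPg (F := F) P, y = g * x}} =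
      Fintype.card F ^ (auxL P lam).ncard := by

  constructor
  · rintro x ⟨g, hg, rfl⟩
    rw [orbit_coset hP hN hlam hg, orbit_eq hlam hP.1, card_coset, card_coset]
  · have hsub : auxL P lam ⊆ adjL (PosUpper n) lam := Set.diff_subset
    have hinj : Set.InjOn
        (fun m : Mat n F => {y : Mat n F | ∃ v ∈ nPa (adjL P lam), y = (lam + m) + v})
        (nPa (auxL P lam)) := by
      intro m hm m' hm' heq
      dsimp only at heq
      have h0 : lam + m ∈ {y : Mat n F | ∃ v ∈ nPa (adjL P lam), y = (lam + m) + v} :=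
        ⟨0, nPa_zero _, (add_zero _).symm⟩
      rw [heq] at h0
      obtain ⟨v, hv, hveq⟩ := h0
      have hmv : m = m' + v := by
        have h2 : lam + m = lam + (m' + v) := by rw [hveq, add_assoc]
        exact add_left_cancel h2
      ext i j
      by_cases ha : (i, j) ∈ auxL P lam
      · have hvij : v i j = 0 := hv i j ha.2
        rw [hmv, Matrix.add_apply, hvij, add_zero]
      · rw [hm i j ha, hm' i j ha]
    have hset : {O : Set (Mat n F) | ∃ x : Mat n F,
          (∃ g ∈ UPg (F := F) (PosUpper n), x = g * lam) ∧
          O = {y : Mat n F | ∃ g ∈ UPg (F := F) P, y = g * x}} =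
        (fun m : Mat n F => {y : Mat n F | ∃ v ∈ nPa (adjL P lam), y = (lam + m) + v}) ''
          (nPa (auxL P lam)) := by
      ext O
      simp only [Set.mem_setOf_eq, Set.mem_image]
      constructor
      · rintro ⟨x, ⟨g, hg, rfl⟩, rfl⟩
        have hw : g * lam ∈ {y : Mat n F | ∃ g ∈ UPg (PosUpper n), y = g * lam} :=
          ⟨g, hg, rfl⟩
        rw [orbit_eq hlam (subset_refl (PosUpper n))] at hw
        obtain ⟨w, hwA, hweq⟩ := hw
        refine ⟨Matrix.of fun i j => if (i, j) ∈ auxL P lam then w i j else 0, ?_, ?_⟩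
        · intro i j hij
          exact if_neg hij
        set m : Mat n F := Matrix.of fun i j => if (i, j) ∈ auxL P lam then w i j else 0
          with hm_def
        have hmx : ∀ i j, m i j = if (i, j) ∈ auxL P lam then w i j else 0 := fun _ _ => rfl
        have hv₀ : w - m ∈ nPa (adjL P lam) := by
          intro i j hij
          by_cases ha : (i, j) ∈ auxL P lam
          · rw [Matrix.sub_apply, hmx, if_pos ha, sub_self]
          · have hnA : (i, j) ∉ adjL (PosUpper n) lam := fun hc => ha ⟨hc, hij⟩
            rw [Matrix.sub_apply, hmx, if_neg ha, hwA i j hnA, sub_zero]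
        rw [eq_comm, orbit_coset hP hN hlam hg, hweq]
        ext y
        simp only [Set.mem_setOf_eq]
        constructor
        · rintro ⟨v, hv, rfl⟩
          exact ⟨(w - m) + v, nPa_add hv₀ hv, by abel⟩
        · rintro ⟨v, hv, rfl⟩
          exact ⟨v - (w - m), nPa_sub hv hv₀, by abel⟩
      · rintro ⟨m, hm, rfl⟩
        have hmA : m ∈ nPa (adjL (PosUpper n) lam) := nPa_mono hsub hm
        have hx : lam + m ∈ {y : Mat n F | ∃ m ∈ nPa (adjL (PosUpper n) lam), y = lam + m} :=
          ⟨m, hmA, rfl⟩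
        rw [← orbit_eq hlam (subset_refl (PosUpper n))] at hx
        obtain ⟨g, hg, hgeq⟩ := hx
        refine ⟨lam + m, ⟨g, hg, hgeq⟩, ?_⟩
        rw [hgeq, orbit_coset hP hN hlam hg, ← hgeq]
    rw [hset, Nat.card_coe_set_eq, Set.ncard_image_of_injOn hinj,
      ← Nat.card_coe_set_eq, card_nPa]
end

section
/- Let P ⊆ [[n]] be a poset normal in [[n]], λ ∈ S_P, and suppose X ∈ n_P has supp(X) ⊆ aux^L_P(λ) (where aux^L_P(λ) = adj^L_{[[n]]}(λ) \ adj^L_P(λ)). Then U_P(λ + X) = U_P λ + X, i.e., the left U_P-orbit of λ + X is the translate of the left U_P-orbit of λ by X. -/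
open scoped Classical

/-- A strictly upper triangular matrix is nilpotent: `N ^ n = 0`. -/
lemma strict_upper_pow_eq_zero {n : ℕ} {F : Type*} [Field F] (N : Mat n F)
    (h : ∀ i j : Fin n, ¬ i < j → N i j = 0) : N ^ n = 0 := by
  have key : ∀ k : ℕ, ∀ i j : Fin n, (N ^ k) i j ≠ 0 → i.val + k ≤ j.val := by
    intro k
    induction k with
    | zero =>
      intro i j hij
      simp only [pow_zero] at hij
      by_cases hij' : i = j
      · subst hij'; omega
      · exact absurd (Matrix.one_apply_ne hij') hij
    | succ k ih =>
      intro i j hij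
      rw [pow_succ, Matrix.mul_apply] at hij
      obtain ⟨m, _, hm⟩ := Finset.exists_ne_zero_of_sum_ne_zero hij
      have h1 := ih i m (left_ne_zero_of_mul hm)
      have h2 : m < j := by
        by_contra hc
        exact (right_ne_zero_of_mul hm) (h m j hc)
      have h3 : (m : ℕ) < (j : ℕ) := h2
      omega
  ext i j
  simp only [Matrix.zero_apply]
  by_contra hc
  have h4 := key n i j hc
  have h5 : (j : ℕ) < n := j.isLt
  omega

/-- If `supp(X) ⊆ aux^L_P(λ)` then `U_P(λ + X) = U_P λ + X`. -/
theorem left_orbit_translate {n : ℕ} {F : Type*} [Field F]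
    (P : Set (Fin n × Fin n)) (hP : IsPoset P) (hN : NormalPoset P)
    (lam : Mat n F) (hlam : lam ∈ SPa P)
    (X : Mat n F) (hX : X ∈ nPa P) (hsupp : msupp X ⊆ auxL P lam) :
    {x : Mat n F | ∃ g ∈ UPg (F := F) P, x = g * (lam + X)} =
      {x : Mat n F | ∃ g ∈ UPg (F := F) P, x = g * lam + X} := by
  classical
  obtain ⟨hlamP, hrow, hcol⟩ := hlam
  have hPirr : ∀ i : Fin n, (i, i) ∉ P := fun i h => lt_irrefl i (hP.1 h)
  -- the pseudo-inverse of lam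
  set M : Mat n F := fun k m => if lam m k ≠ 0 then (lam m k)⁻¹ else 0 with hMdef
  set N : Mat n F := X * M with hNdef
  -- basic structure of nonzero entries of N
  have hNstruct : ∀ j m : Fin n, N j m ≠ 0 → ∃ k, X j k ≠ 0 ∧ lam m k ≠ 0 := by
    intro j m hjm
    rw [hNdef, Matrix.mul_apply] at hjm
    obtain ⟨k, _, hk⟩ := Finset.exists_ne_zero_of_sum_ne_zero hjm
    refine ⟨k, left_ne_zero_of_mul hk, ?_⟩
    have hMk := right_ne_zero_of_mul hk
    rw [hMdef] at hMk
    by_contra hzero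
    simp [hzero] at hMk
  have hNfacts : ∀ j m : Fin n, N j m ≠ 0 → j < m ∧ (j, m) ∉ P := by
    intro j m hjm
    obtain ⟨k, hXjk, hlmk⟩ := hNstruct j m hjm
    have haux : (j, k) ∈ auxL P lam := hsupp hXjk
    obtain ⟨⟨m', hm'⟩, hnadj⟩ := haux
    have hmm : m' = m := hcol m' m k hm'.1 hlmk
    subst hmm
    exact ⟨hm'.2, fun hjmP => hnadj ⟨m', hlmk, hjmP⟩⟩
  have hNupper : ∀ i j : Fin n, ¬ i < j → N i j = 0 := by
    intro i j hij
    by_contra hc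
    exact hij (hNfacts i j hc).1
  -- E * N stays in n_P, by normality
  have hEN : ∀ E : Mat n F, E ∈ nPa P → E * N ∈ nPa P := by
    intro E hE i m him
    rw [Matrix.mul_apply]
    apply Finset.sum_eq_zero
    intro j _
    by_cases hEij : E i j = 0
    · rw [hEij, zero_mul]
    · have hijP : (i, j) ∈ P := by
        by_contra hc; exact hEij (hE i j hc)
      by_cases hNjm : N j m = 0
      · rw [hNjm, mul_zero]
      · obtain ⟨hjm, hjmP⟩ := hNfacts j m hNjm
        have hij : i < j := hP.1 hijP
        exact absurd hijP (hN i i j m le_rfl hij (le_of_lt hjm) him)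
  -- N * lam = X
  have hMlam : ∀ a b : Fin n, (M * lam) a b =
      if (∃ m, lam m a ≠ 0) ∧ b = a then 1 else 0 := by
    intro a b
    rw [Matrix.mul_apply]
    by_cases hpiv : ∃ m, lam m a ≠ 0
    · obtain ⟨m₀, hm₀⟩ := hpiv
      rw [Finset.sum_eq_single m₀]
      · rw [hMdef]
        simp only [ne_eq, hm₀, not_false_eq_true, if_true]
        by_cases hb : lam m₀ b ≠ 0
        · have hba : b = a := hrow m₀ b a hb hm₀
          subst hba
          rw [inv_mul_cancel₀ hm₀, if_pos ⟨⟨m₀, hm₀⟩, rfl⟩]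
        · push_neg at hb
          rw [hb, mul_zero]
          rw [if_neg]
          rintro ⟨-, rfl⟩
          exact hm₀ hb
      · intro m _ hm
        by_cases hma : lam m a = 0
        · rw [hMdef]; simp [hma]
        · exact absurd (hcol m m₀ a hma hm₀) hm
      · intro hmem; exact absurd (Finset.mem_univ m₀) hmem
    · push_neg at hpiv
      rw [if_neg (by rintro ⟨⟨m, hm⟩, -⟩; exact hm (hpiv m))]
      apply Finset.sum_eq_zero
      intro m _
      rw [hMdef]
      simp [hpiv m]
  have hNlam : N * lam = X := by
    rw [hNdef, Matrix.mul_assoc]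
    ext j k
    rw [Matrix.mul_apply]
    rw [Finset.sum_eq_single k]
    · rw [hMlam k k]
      by_cases hXjk : X j k = 0
      · by_cases hpiv : (∃ m, lam m k ≠ 0) ∧ k = k
        · rw [if_pos hpiv, mul_one, hXjk]
        · rw [if_neg hpiv, mul_zero, hXjk]
      · obtain ⟨⟨m', hm'⟩, -⟩ := hsupp (show (j, k) ∈ msupp X from hXjk)
        rw [if_pos ⟨⟨m', hm'.1⟩, rfl⟩, mul_one]
    · intro a _ ha
      rw [hMlam a k, if_neg (by rintro ⟨-, rfl⟩; exact ha rfl), mul_zero]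
    · intro hmem; exact absurd (Finset.mem_univ k) hmem
  have hlamX : lam + X = (1 + N) * lam := by
    rw [add_mul, one_mul, hNlam]
  -- closure facts about nPa
  have hnPa_neg : ∀ A : Mat n F, A ∈ nPa P → -A ∈ nPa P := by
    intro A hA i j hij
    simp only [Matrix.neg_apply, hA i j hij, neg_zero]
  have hg_sub_one : ∀ g : Mat n F, g ∈ UPg (F := F) P → g - 1 ∈ nPa P := by
    intro g hg i j hij
    by_cases h : i = j
    · subst h
      simp [Matrix.sub_apply, hg.1 i]
    · rw [Matrix.sub_apply, hg.2 i j h hij, Matrix.one_apply_ne h, sub_zero]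
  ext x
  simp only [Set.mem_setOf_eq]
  constructor
  · rintro ⟨g, hg, rfl⟩
    have hE : g - 1 ∈ nPa P := hg_sub_one g hg
    have hENmem : (g - 1) * N ∈ nPa P := hEN _ hE
    refine ⟨g + (g - 1) * N, ?_, ?_⟩
    · constructor
      · intro i
        rw [Matrix.add_apply, hg.1 i, hENmem i i (hPirr i), add_zero]
      · intro i j hij hijP
        rw [Matrix.add_apply, hg.2 i j hij hijP, hENmem i j hijP, add_zero]
    · rw [← hNlam]
      noncomm_ring
  · rintro ⟨g, hg, rfl⟩
    have hE : g - 1 ∈ nPa P := hg_sub_one g hg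
    set V : Mat n F := ∑ k ∈ Finset.range n, (-N) ^ k with hVdef
    have hNn : N ^ n = 0 := strict_upper_pow_eq_zero N hNupper
    have hVmul : V * (1 + N) = 1 := by
      have h1 : V * (-N - 1) = (-N) ^ n - 1 := geom_sum_mul (-N) n
      have h2 : (-N) ^ n = 0 := by
        rw [neg_pow, hNn, mul_zero]
      rw [h2] at h1
      have h3 : V * (1 + N) = -(V * (-N - 1)) := by noncomm_ring
      rw [h3, h1]
      simp
    have hEVk : ∀ k : ℕ, (g - 1) * (-N) ^ k ∈ nPa P := by
      intro k
      induction k with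
      | zero => simpa using hE
      | succ k ih =>
        have : (g - 1) * (-N) ^ (k + 1) = -(((g - 1) * (-N) ^ k) * N) := by
          rw [pow_succ, ← mul_assoc]
          noncomm_ring
        rw [this]
        exact hnPa_neg _ (hEN _ ih)
    have hEV : (g - 1) * V ∈ nPa P := by
      rw [hVdef, Finset.mul_sum]
      intro i j hij
      rw [Matrix.sum_apply]
      exact Finset.sum_eq_zero fun k _ => hEVk k i j hij
    refine ⟨1 + (g - 1) * V, ?_, ?_⟩
    · constructor
      · intro i
        rw [Matrix.add_apply, Matrix.one_apply_eq, hEV i i (hPirr i), add_zero]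
      · intro i j hij hijP
        rw [Matrix.add_apply, Matrix.one_apply_ne hij, hEV i j hijP, add_zero]
    · have hkey : (1 + (g - 1) * V) * (1 + N) = g + N := by
        have h4 : (g - 1) * V * (1 + N) = g - 1 := by
          rw [mul_assoc, hVmul, mul_one]
        calc (1 + (g - 1) * V) * (1 + N)
            = (1 + N) + (g - 1) * V * (1 + N) := by noncomm_ring
          _ = (1 + N) + (g - 1) := by rw [h4]
          _ = g + N := by noncomm_ring
      rw [hlamX, ← Matrix.mul_assoc, hkey, add_mul, hNlam]
end

section
/- Let P ⊆ [[n]] be a poset normal in [[n]] and λ ∈ S_P. Let X_1, X_2 ∈ n_P have supports contained in aux_P(λ) \ aux^L_P(λ). Then there exist h_1, h_2 ∈ U_n with X_i = λ h_i − λ for i = 1, 2, such that supp(λ h_1 h_2^{-1}) ∩ aux^L_P(λ) = ∅. -/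
open scoped Classical

section Aux

variable {n : ℕ} {F : Type*} [Field F]

/-- Characterization of positions in `auxF \ auxL`. -/
lemma aux_char {P : Set (Fin n × Fin n)} {lam : Mat n F} {i k : Fin n}
    (h : (i, k) ∈ auxF P lam \ auxL P lam) :
    (∃ b, lam i b ≠ 0 ∧ b < k) ∧ ∀ j, lam j k ≠ 0 → ¬(i < j) := by
  obtain ⟨⟨hadj, hnadj⟩, hnaux⟩ := h
  have hnL : (i, k) ∉ adjL (PosUpper n) lam := by
    intro hL
    exact hnaux ⟨hL, fun hPL => hnadj (Or.inl hPL)⟩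
  refine ⟨?_, ?_⟩
  · rcases hadj with hL | hR
    · exact absurd hL hnL
    · obtain ⟨b, hb1, hb2⟩ := hR
      exact ⟨b, hb1, hb2⟩
  · intro j hj hij
    exact hnL ⟨j, hj, hij⟩

/-- The auxiliary matrix `G(Z)` with `λ · G(Z) = Z` for suitable `Z`. -/
noncomputable def Gmat (lam Z : Mat n F) : Mat n F :=
  fun j k => ∑ i, if lam i j ≠ 0 then (lam i j)⁻¹ * Z i k else 0

lemma Gmat_ne_zero {lam Z : Mat n F} {j k : Fin n} (h : Gmat lam Z j k ≠ 0) :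
    ∃ i, lam i j ≠ 0 ∧ Z i k ≠ 0 := by
  by_contra hc
  push_neg at hc
  apply h
  apply Finset.sum_eq_zero
  intro i _
  by_cases hl : lam i j ≠ 0
  · rw [if_pos hl, hc i hl, mul_zero]
  · rw [if_neg hl]

lemma lam_mul_Gmat {P : Set (Fin n × Fin n)} {lam : Mat n F} (hlam : lam ∈ SPa P)
    {Z : Mat n F} (hrow : ∀ i k : Fin n, Z i k ≠ 0 → ∃ b, lam i b ≠ 0) :
    lam * Gmat lam Z = Z := by
  obtain ⟨-, hrowu, hcolu⟩ := hlam
  ext i k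
  rw [Matrix.mul_apply]
  by_cases hb : ∃ b, lam i b ≠ 0
  · obtain ⟨b, hb⟩ := hb
    rw [Finset.sum_eq_single b]
    · show lam i b * Gmat lam Z b k = Z i k
      unfold Gmat
      rw [Finset.sum_eq_single i]
      · rw [if_pos hb, ← mul_assoc, mul_inv_cancel₀ hb, one_mul]
      · intro i' _ hi'
        by_cases h : lam i' b ≠ 0
        · exact absurd (hcolu i' i b h hb) hi'
        · rw [if_neg h]
      · intro h; exact absurd (Finset.mem_univ i) h
    · intro j _ hj
      by_cases hij : lam i j = 0
      · rw [hij, zero_mul]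
      · exact absurd (hrowu i j b hij hb) hj
    · intro h; exact absurd (Finset.mem_univ b) h
  · push_neg at hb
    have hZ : Z i k = 0 := by
      by_contra h
      obtain ⟨b, hbb⟩ := hrow i k h
      exact hbb (hb b)
    rw [hZ]
    apply Finset.sum_eq_zero
    intro j _
    rw [hb j, zero_mul]

lemma Gmat_upper {lam Z : Mat n F}
    (hcol : ∀ i j k : Fin n, lam i j ≠ 0 → Z i k ≠ 0 → j < k) :
    ∀ j k : Fin n, ¬ j < k → Gmat lam Z j k = 0 := by
  intro j k hjk
  apply Finset.sum_eq_zero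
  intro i _
  by_cases hl : lam i j ≠ 0
  · rw [if_pos hl]
    have hZ : Z i k = 0 := by
      by_contra h
      exact hjk (hcol i j k hl h)
    rw [hZ, mul_zero]
  · rw [if_neg hl]

lemma supper_pow {A : Mat n F} (hA : ∀ i j : Fin n, ¬ i < j → A i j = 0) :
    ∀ (m : ℕ) (i j : Fin n), (j : ℕ) < (i : ℕ) + m → (A ^ m) i j = 0 := by
  intro m
  induction m with
  | zero =>
    intro i j h
    have : i ≠ j := by
      intro he; subst he; omega
    simp [Matrix.one_apply_ne this]
  | succ m ih =>
    intro i j h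
    rw [pow_succ, Matrix.mul_apply]
    apply Finset.sum_eq_zero
    intro k _
    by_cases hk : (k : ℕ) < (i : ℕ) + m
    · rw [ih i k hk, zero_mul]
    · have hkj : ¬ k < j := by
        rw [Fin.lt_def]; omega
      rw [hA k j hkj, mul_zero]

lemma supper_pow_n {A : Mat n F} (hA : ∀ i j : Fin n, ¬ i < j → A i j = 0) :
    A ^ n = 0 := by
  ext i j
  rw [supper_pow hA n i j (by omega)]
  rfl

lemma supper_pow_upper {A : Mat n F} (hA : ∀ i j : Fin n, ¬ i < j → A i j = 0)
    (m : ℕ) {i j : Fin n} (h : ¬ i ≤ j) : (A ^ m) i j = 0 := by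
  apply supper_pow hA
  rw [Fin.le_def] at h
  omega

lemma one_add_mem_UPg {g : Mat n F} (hg : ∀ i j : Fin n, ¬ i < j → g i j = 0) :
    (1 + g) ∈ UPg (F := F) (PosUpper n) := by
  constructor
  · intro i
    show (1 : Mat n F) i i + g i i = 1
    rw [Matrix.one_apply_eq, hg i i (lt_irrefl i), add_zero]
  · intro i j hne hP
    show (1 : Mat n F) i j + g i j = 0
    rw [Matrix.one_apply_ne hne, hg i j hP, add_zero]

lemma UPg_mul_mem {g h : Mat n F} (hg : g ∈ UPg (F := F) (PosUpper n))
    (hh : h ∈ UPg (F := F) (PosUpper n)) : g * h ∈ UPg (F := F) (PosUpper n) := by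
  obtain ⟨hgd, hgo⟩ := hg
  obtain ⟨hhd, hho⟩ := hh
  have hg0 : ∀ i j : Fin n, j < i → g i j = 0 := by
    intro i j hji
    exact hgo i j (ne_of_gt hji) (fun hij => absurd hij (not_lt_of_gt hji))
  have hh0 : ∀ i j : Fin n, j < i → h i j = 0 := by
    intro i j hji
    exact hho i j (ne_of_gt hji) (fun hij => absurd hij (not_lt_of_gt hji))
  constructor
  · intro i
    rw [Matrix.mul_apply, Finset.sum_eq_single i]
    · rw [hgd, hhd, one_mul]
    · intro k _ hk
      rcases lt_or_gt_of_ne hk with hlt | hgt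
      · rw [hg0 i k hlt, zero_mul]
      · rw [hh0 k i hgt, mul_zero]
    · intro hmem; exact absurd (Finset.mem_univ i) hmem
  · intro i j hne hP
    have hji : j < i := by
      rcases lt_trichotomy i j with h1 | h1 | h1
      · exact absurd h1 hP
      · exact absurd h1 hne
      · exact h1
    rw [Matrix.mul_apply]
    apply Finset.sum_eq_zero
    intro k _
    by_cases hik : k < i
    · rw [hg0 i k hik, zero_mul]
    · have : j < k := lt_of_lt_of_le hji (not_lt.mp hik)
      rw [hh0 k j this, mul_zero]

end Aux

/-- Technical lemma: representatives `h₁, h₂ ∈ U_n` with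
`X_i = λhᵢ − λ` and `supp(λh₁h₂⁻¹) ∩ aux^L_P(λ) = ∅`. -/
theorem technical_representatives {n : ℕ} {F : Type*} [Field F]
    (P : Set (Fin n × Fin n)) (hP : IsPoset P) (hN : NormalPoset P)
    (lam : Mat n F) (hlam : lam ∈ SPa P)
    (X₁ X₂ : Mat n F) (hX₁ : msupp X₁ ⊆ auxF P lam \ auxL P lam)
    (hX₂ : msupp X₂ ⊆ auxF P lam \ auxL P lam) :
    ∃ h₁ ∈ UPg (F := F) (PosUpper n), ∃ h₂ ∈ UPg (F := F) (PosUpper n),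
      X₁ = lam * h₁ - lam ∧ X₂ = lam * h₂ - lam ∧
      msupp (lam * h₁ * h₂⁻¹) ∩ auxL P lam = ∅ := by
  classical
  have hrowu := hlam.2.1
  have hcolu := hlam.2.2
  -- characterizations of supports
  have hchar : ∀ (X : Mat n F), msupp X ⊆ auxF P lam \ auxL P lam →
      ∀ i k : Fin n, X i k ≠ 0 →
      (∃ b, lam i b ≠ 0 ∧ b < k) ∧ ∀ j, lam j k ≠ 0 → ¬(i < j) :=
    fun X hX i k h => aux_char (hX h)
  have hchar₁ := hchar X₁ hX₁
  have hchar₂ := hchar X₂ hX₂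
  set g₂ : Mat n F := Gmat lam X₂ with hg₂def
  have hg₂up : ∀ j k : Fin n, ¬ j < k → g₂ j k = 0 := by
    apply Gmat_upper
    intro i j k hij hXik
    obtain ⟨⟨b, hb, hbk⟩, -⟩ := hchar₂ i k hXik
    exact (hrowu i j b hij hb) ▸ hbk
  have hlamg₂ : lam * g₂ = X₂ := by
    apply lam_mul_Gmat hlam
    intro i k h
    obtain ⟨⟨b, hb, -⟩, -⟩ := hchar₂ i k h
    exact ⟨b, hb⟩
  -- the geometric-series inverse of 1 + g₂
  set x : Mat n F := -g₂ with hxdef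
  have hxup : ∀ i j : Fin n, ¬ i < j → x i j = 0 := by
    intro i j h
    show -(g₂ i j) = 0
    rw [hg₂up i j h, neg_zero]
  set w : Mat n F := ∑ m ∈ Finset.range n, x ^ m with hwdef
  have hxn : x ^ n = 0 := supper_pow_n hxup
  have hw_left : w * (1 + g₂) = 1 := by
    have h1 : (1 : Mat n F) + g₂ = -(x - 1) := by
      rw [hxdef]; abel
    rw [h1, hwdef, mul_neg, geom_sum_mul, hxn, zero_sub, neg_neg]
  have hw_right : (1 + g₂) * w = 1 := mul_eq_one_comm.mpr hw_left
  have hwup : ∀ c k : Fin n, ¬ c ≤ k → w c k = 0 := by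
    intro c k h
    rw [hwdef, Matrix.sum_apply]
    apply Finset.sum_eq_zero
    intro m _
    exact supper_pow_upper hxup m h
  -- the matrix Y and the correction d
  set X : Mat n F := X₁ - X₂ with hXdef
  have hXne : ∀ i c : Fin n, X i c ≠ 0 → X₁ i c ≠ 0 ∨ X₂ i c ≠ 0 := by
    intro i c h
    by_contra hc
    push_neg at hc
    apply h
    show X₁ i c - X₂ i c = 0
    rw [hc.1, hc.2, sub_zero]
  set Y : Mat n F := X * w with hYdef
  have hYne : ∀ i k : Fin n, Y i k ≠ 0 → ∃ c, X i c ≠ 0 ∧ w c k ≠ 0 := by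
    intro i k h
    by_contra hc
    push_neg at hc
    apply h
    rw [hYdef, Matrix.mul_apply]
    apply Finset.sum_eq_zero
    intro c _
    by_cases hX : X i c = 0
    · rw [hX, zero_mul]
    · rw [hc c hX, mul_zero]
  have hYrow : ∀ i k : Fin n, Y i k ≠ 0 → ∃ b, lam i b ≠ 0 := by
    intro i k h
    obtain ⟨c, hc, -⟩ := hYne i k h
    rcases hXne i c hc with h1 | h1
    · obtain ⟨⟨b, hb, -⟩, -⟩ := hchar₁ i c h1; exact ⟨b, hb⟩
    · obtain ⟨⟨b, hb, -⟩, -⟩ := hchar₂ i c h1; exact ⟨b, hb⟩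
  have hYcol : ∀ i j k : Fin n, lam i j ≠ 0 → Y i k ≠ 0 → j < k := by
    intro i j k hij h
    obtain ⟨c, hc, hwc⟩ := hYne i k h
    have hck : c ≤ k := by
      by_contra hck
      exact hwc (hwup c k hck)
    have hjc : j < c := by
      rcases hXne i c hc with h1 | h1
      · obtain ⟨⟨b, hb, hbc⟩, -⟩ := hchar₁ i c h1
        exact (hrowu i j b hij hb) ▸ hbc
      · obtain ⟨⟨b, hb, hbc⟩, -⟩ := hchar₂ i c h1
        exact (hrowu i j b hij hb) ▸ hbc
    exact lt_of_lt_of_le hjc hck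
  set d : Mat n F := Gmat lam Y with hddef
  have hdup : ∀ j k : Fin n, ¬ j < k → d j k = 0 := Gmat_upper hYcol
  have hlamd : lam * d = Y := lam_mul_Gmat hlam hYrow
  -- the group elements
  have hexp : lam * (1 + d) = lam + Y := by rw [mul_add, Matrix.mul_one, hlamd]
  have hY2 : Y * (1 + g₂) = X := by
    calc Y * (1 + g₂) = X * (w * (1 + g₂)) := by rw [hYdef, mul_assoc]
      _ = X := by rw [hw_left, Matrix.mul_one]
  have hfull : lam * ((1 + d) * (1 + g₂)) = lam + X₁ := by
    calc lam * ((1 + d) * (1 + g₂)) = (lam * (1 + d)) * (1 + g₂) := by rw [mul_assoc]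
      _ = (lam + Y) * (1 + g₂) := by rw [hexp]
      _ = lam * (1 + g₂) + Y * (1 + g₂) := by rw [add_mul]
      _ = (lam + X₂) + X := by rw [hY2, mul_add, Matrix.mul_one, hlamg₂]
      _ = lam + X₁ := by rw [hXdef]; abel
  refine ⟨(1 + d) * (1 + g₂), UPg_mul_mem (one_add_mem_UPg hdup) (one_add_mem_UPg hg₂up),
    1 + g₂, one_add_mem_UPg hg₂up, ?_, ?_, ?_⟩
  · -- X₁ = lam * h₁ - lam
    rw [hfull]; abel
  · -- X₂ = lam * h₂ - lam
    rw [mul_add, Matrix.mul_one, hlamg₂]; abel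
  · -- the support condition
    have hinv : (1 + g₂)⁻¹ = w := Matrix.inv_eq_right_inv hw_right
    have hmul : lam * ((1 + d) * (1 + g₂)) * (1 + g₂)⁻¹ = lam + Y := by
      rw [hinv]
      calc lam * ((1 + d) * (1 + g₂)) * w
          = (lam * (1 + d)) * ((1 + g₂) * w) := by
            rw [← mul_assoc lam, mul_assoc (lam * (1 + d))]
        _ = lam + Y := by rw [hw_right, Matrix.mul_one, hexp]
    rw [hmul]
    -- positions where some column entry of lam lies strictly below kill everything
    have hGood : ∀ m : ℕ, ∀ i l : Fin n,
        (∃ j, lam j l ≠ 0 ∧ i < j) → (X * x ^ m) i l = 0 := by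
      intro m
      induction m with
      | zero =>
        intro i l ⟨j, hj, hij⟩
        rw [pow_zero, Matrix.mul_one]
        by_contra h
        rcases hXne i l h with h1 | h1
        · exact (hchar₁ i l h1).2 j hj hij
        · exact (hchar₂ i l h1).2 j hj hij
      | succ m ih =>
        intro i l ⟨j, hj, hij⟩
        rw [pow_succ, ← mul_assoc, Matrix.mul_apply]
        apply Finset.sum_eq_zero
        intro k _
        by_cases hx : x k l = 0
        · rw [hx, mul_zero]
        · have hg : g₂ k l ≠ 0 := by
            intro h; apply hx; show -(g₂ k l) = 0; rw [h, neg_zero]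
          obtain ⟨i', hi'k, hXi'⟩ := Gmat_ne_zero hg
          have h2 := (hchar₂ i' l hXi').2 j hj
          have hji' : j ≤ i' := not_lt.mp h2
          have hii' : i < i' := lt_of_lt_of_le hij hji'
          rw [ih i k ⟨i', hi'k, hii'⟩, zero_mul]
    rw [Set.eq_empty_iff_forall_notMem]
    rintro ⟨i, l⟩ ⟨hsupp, ⟨⟨j, hj, hij⟩, -⟩⟩
    apply hsupp
    show lam i l + Y i l = 0
    have hlamil : lam i l = 0 := by
      by_contra h
      exact absurd (hcolu i j l h hj) (ne_of_lt hij)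
    have hYil : Y i l = 0 := by
      rw [hYdef, hwdef, Finset.mul_sum, Matrix.sum_apply]
      apply Finset.sum_eq_zero
      intro m _
      exact hGood m i l ⟨j, hj, hij⟩
    rw [hlamil, hYil, add_zero]
end

section
/- Let P ⊆ [[n]] be a poset normal in [[n]] and λ ∈ S*_P a labeled set partition in the dual n*_P. Then the set S = supp(λ) ∪ coaux_P(λ) is the set of covers of a poset on [n]; equivalently, if (i,j), (j,k) ∈ S then (i,k) ∉ S. -/
open scoped Classical

/-- `coadj^L_Q(λ) = {(j,k) ∈ P : ∃ i, (i,k) ∈ supp(λ), (i,j) ∈ Q}`. -/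
def coadjL {n : ℕ} {F : Type*} [Field F] (P Q : Set (Fin n × Fin n)) (lam : Mat n F) :
    Set (Fin n × Fin n) :=
  {p | p ∈ P ∧ ∃ i : Fin n, (i, p.2) ∈ msupp lam ∧ (i, p.1) ∈ Q}

/-- `coadj^R_Q(λ) = {(i,j) ∈ P : ∃ k, (i,k) ∈ supp(λ), (j,k) ∈ Q}`. -/
def coadjR {n : ℕ} {F : Type*} [Field F] (P Q : Set (Fin n × Fin n)) (lam : Mat n F) :
    Set (Fin n × Fin n) :=
  {p | p ∈ P ∧ ∃ k : Fin n, (p.1, k) ∈ msupp lam ∧ (p.2, k) ∈ Q}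

/-- `coadj_Q(λ) = coadj^L_Q(λ) ∪ coadj^R_Q(λ)`. -/
def coadjF {n : ℕ} {F : Type*} [Field F] (P Q : Set (Fin n × Fin n)) (lam : Mat n F) :
    Set (Fin n × Fin n) := coadjL P Q lam ∪ coadjR P Q lam

/-- `coaux_P(λ) = coadj_{[[n]]}(λ) \ coadj_P(λ)`. -/
def coauxF {n : ℕ} {F : Type*} [Field F] (P : Set (Fin n × Fin n)) (lam : Mat n F) :
    Set (Fin n × Fin n) := coadjF P (PosUpper n) lam \ coadjF P P lam

/-- The set of covers of a poset `P`. -/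
def covers {n : ℕ} (P : Set (Fin n × Fin n)) : Set (Fin n × Fin n) :=
  {p | p ∈ P ∧ ¬ ∃ j : Fin n, (p.1, j) ∈ P ∧ (j, p.2) ∈ P}

/-- `supp(λ) ∪ coaux_P(λ)` is the cover set of a poset on `[n]`:
no two composable elements have their composition in the set. -/
theorem supp_union_coaux_is_cover_set {n : ℕ} {F : Type*} [Field F]
    (P : Set (Fin n × Fin n)) (hP : IsPoset P) (hN : NormalPoset P)
    (lam : Mat n F) (hlam : lam ∈ SPa P) :
    (∃ R : Set (Fin n × Fin n), IsPoset R ∧ covers R = msupp lam ∪ coauxF P lam) ∧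
    (∀ i j k : Fin n, (i, j) ∈ msupp lam ∪ coauxF P lam →
      (j, k) ∈ msupp lam ∪ coauxF P lam → (i, k) ∉ msupp lam ∪ coauxF P lam) := by
  classical
  set S : Set (Fin n × Fin n) := msupp lam ∪ coauxF P lam with hSdef
  -- basic facts
  have hSP : S ⊆ P := by
    intro p hp
    cases hp with
    | inl h =>
      by_contra hc
      exact h (hlam.1 p.1 p.2 hc)
    | inr h =>
      rcases h.1 with h' | h'
      · exact h'.1
      · exact h'.1
  have hWiden : ∀ i j k l : Fin n, i ≤ j → (j, k) ∈ P → k ≤ l → (i, l) ∈ P := by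
    intro i j k l hij hjk hkl
    by_contra hc
    exact hN i j k l hij (hP.1 hjk) hkl hc hjk
  have hC2 : ∀ a b : Fin n, (a, b) ∈ coauxF P lam →
      (∃ m : Fin n, (m, b) ∈ msupp lam ∧ m < a) ∨
      (∃ m : Fin n, (a, m) ∈ msupp lam ∧ b < m) := by
    intro a b h
    rcases h.1 with h' | h'
    · exact Or.inl h'.2
    · exact Or.inr h'.2
  have hC3 : ∀ a b m : Fin n, (a, b) ∈ coauxF P lam → (m, b) ∈ msupp lam →
      (m, a) ∉ P := by
    intro a b m h hm hma
    have hab : (a, b) ∈ P := hSP (Or.inr h)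
    exact h.2 (Or.inl ⟨hab, m, hm, hma⟩)
  have hC4 : ∀ a b k₀ : Fin n, (a, b) ∈ coauxF P lam → (a, k₀) ∈ msupp lam →
      (b, k₀) ∉ P := by
    intro a b k₀ h hk hbk
    have hab : (a, b) ∈ P := hSP (Or.inr h)
    exact h.2 (Or.inr ⟨hab, k₀, hk, hbk⟩)
  -- the key lemma
  have key : ∀ i u v k : Fin n, (i, u) ∈ S → (v, k) ∈ S → u ≤ v → (i, k) ∉ S := by
    intro i u v k hiu hvk huv hik
    have hiuP : (i, u) ∈ P := hSP hiu
    have hvkP : (v, k) ∈ P := hSP hvk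
    have hiu_lt : i < u := hP.1 hiuP
    have hvk_lt : v < k := hP.1 hvkP
    cases hik with
    | inl hsupp =>
      cases hiu with
      | inl hsupp' =>
        have huk : u = k := hlam.2.1 i u k hsupp' hsupp
        exact absurd huk (by omega)
      | inr haux =>
        exact hC4 i u k haux hsupp (hWiden u v k k huv hvkP le_rfl)
    | inr haux =>
      rcases hC2 i k haux with ⟨m, hm, hmi⟩ | ⟨m, hm, hkm⟩
      · cases hvk with
        | inl hsupp' =>
          have hmv : m = v := hlam.2.2 m v k hm hsupp'
          exact absurd hmv (by omega)
        | inr haux' =>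
          exact hC3 v k m haux' hm (hWiden m i u v hmi.le hiuP huv)
      · cases hiu with
        | inl hsupp' =>
          have hum : u = m := hlam.2.1 i u m hsupp' hm
          exact absurd hum (by omega)
        | inr haux' =>
          exact hC4 i u m haux' hm (hWiden u v k m huv hvkP hkm.le)
  constructor
  · -- the transitive closure of S is a poset with cover set S
    set rel : Fin n → Fin n → Prop := fun a b => (a, b) ∈ S with hrel
    have hmono : ∀ a b : Fin n, Relation.TransGen rel a b → a < b := by
      intro a b h
      induction h with
      | single h' => exact hP.1 (hSP h')
      | tail _ h' ih => exact ih.trans (hP.1 (hSP h'))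
    have hmono' : ∀ a b : Fin n, Relation.ReflTransGen rel a b → a ≤ b := by
      intro a b h
      induction h with
      | refl => exact le_rfl
      | tail _ h' ih => exact ih.trans (hP.1 (hSP h')).le
    refine ⟨{p | Relation.TransGen rel p.1 p.2}, ⟨fun p hp => hmono p.1 p.2 hp,
      fun i j k h1 h2 => Relation.TransGen.trans h1 h2⟩, ?_⟩
    ext ⟨i, k⟩
    constructor
    · rintro ⟨hR, hnc⟩
      obtain ⟨b, hib, hbk⟩ := Relation.TransGen.tail'_iff.mp hR
      rcases Relation.ReflTransGen.cases_head hib with h | ⟨c, hc, hcb⟩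
      · subst h; exact hbk
      · exact absurd ⟨c, Relation.TransGen.single hc,
          Relation.TransGen.tail' hcb hbk⟩ hnc
    · intro hs
      refine ⟨Relation.TransGen.single hs, ?_⟩
      rintro ⟨j, h1, h2⟩
      obtain ⟨u, hu, huj⟩ := Relation.TransGen.head'_iff.mp h1
      obtain ⟨v, hjv, hv⟩ := Relation.TransGen.tail'_iff.mp h2
      exact key i u v k hu hv ((hmono' u j huj).trans (hmono' j v hjv)) hs
  · intro i j k hij hjk
    exact key i j j k hij hjk le_rfl
end

section
/- Every finite poset P on [n] (viewed as a subset of [[n]] closed under composition) has a unique highest cover set: there is a unique independent subset S of the cover set P^cov such that the integer partition ℓ_S (whose parts are the lengths j − i over (i,j) ∈ S, sorted decreasingly) is maximal in the lexicographic order among ℓ_T over all independent subsets T ⊆ P^cov. -/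
open scoped Classical

/-- A set of positions is independent if no two distinct elements share a first
coordinate or a second coordinate. -/
def Indep {n : ℕ} (S : Finset (Fin n × Fin n)) : Prop :=
  ∀ p ∈ S, ∀ q ∈ S, p ≠ q → p.1 ≠ q.1 ∧ p.2 ≠ q.2

/-- The weakly decreasing sequence of lengths `j - i` over `(i,j) ∈ S`, padded with
zeros. -/
noncomputable def lenSeq {n : ℕ} (S : Finset (Fin n × Fin n)) : ℕ → ℕ :=
  fun m => (((S.val.map fun p => (p.2 : ℕ) - (p.1 : ℕ)).sort (· ≤ ·)).reverse.getD m 0)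

/-- Lexicographic comparison of integer sequences. -/
def lexGe (f g : ℕ → ℕ) : Prop :=
  f = g ∨ ∃ m : ℕ, (∀ i < m, f i = g i) ∧ g m < f m

/-- `S` is a highest cover set of the poset `P`. -/
def IsHighestCoverSet {n : ℕ} (P : Set (Fin n × Fin n)) (S : Finset (Fin n × Fin n)) : Prop :=
  ↑S ⊆ covers P ∧ Indep S ∧
    ∀ T : Finset (Fin n × Fin n), ↑T ⊆ covers P → Indep T → lexGe (lenSeq S) (lenSeq T)

/-- `P` decomposes into chains: there is a partition of `[n]` (given by a coloring)
such that `P` consists exactly of the pairs `i < j` lying in a common part. -/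
def DecomposesIntoChains {n : ℕ} (P : Set (Fin n × Fin n)) : Prop :=
  ∃ c : Fin n → Fin n, ∀ i j : Fin n, i < j → ((i, j) ∈ P ↔ c i = c j)

/-- `Q` is a `P`-representative poset. -/
def PRep {n : ℕ} (P Q : Set (Fin n × Fin n)) : Prop :=
  Q ⊆ P ∧ ∀ S : Finset (Fin n × Fin n), IsHighestCoverSet Q S →
    (∀ p ∈ S, ∀ j : Fin n, (p.1, j) ∈ covers Q → (j, p.2) ∉ P) ∧
    (∀ p ∈ S, ∀ j : Fin n, (j, p.2) ∈ covers Q → (p.1, j) ∉ P)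

/-!
Two covers of the same length that share an endpoint coincide, so the covers of one fixed length
never conflict with each other. Hence the greedy choice is well defined: run through the lengths
from the longest down and keep every cover that is not blocked by a longer cover already kept.

It is the unique lexicographic maximum. Let `T` be an independent set of covers other than the
greedy set `G`, and let `w` be the largest length such that `T` and `G` differ in their elements
of length `≥ w`. Above `w` they agree, so no cover of length `w` in `T` is blocked, and all of
them lie in `G`. Thus `G` has strictly more parts `≥ w` than `T` and the same number of parts
`≥ v` for every `v > w`, which makes `ℓ_G` lexicographically larger than `ℓ_T`.
-/

open Finset

theorem le_getD_iff_lt_countP {l : List ℕ} (hl : l.Pairwise (· ≥ ·)) {v : ℕ} (hv : 0 < v)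
    (m : ℕ) : v ≤ l.getD m 0 ↔ m < l.countP (v ≤ ·) := by
  induction l generalizing m with
  | nil => simp; omega
  | cons a t ih =>
    obtain ⟨ha, ht⟩ := List.pairwise_cons.mp hl
    by_cases hva : v ≤ a
    · cases m with
      | zero => simp [hva]
      | succ m => rw [List.getD_cons_succ, ih ht m]; simp [hva]
    · have hsmall : ∀ x ∈ a :: t, x < v := by
        simp only [List.mem_cons, forall_eq_or_imp]
        exact ⟨by omega, fun x hx => by have := ha x hx; omega⟩
      have hnone : (a :: t).countP (v ≤ ·) = 0 :=
        List.countP_eq_zero.2 fun x hx => by simpa using hsmall x hx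
      rw [hnone, List.getD_eq_getElem?_getD]
      rcases h : (a :: t)[m]? with _ | x
      · simp; omega
      · simpa using hsmall x (List.mem_of_getElem? h)

noncomputable def descSeq (s : Multiset ℕ) (m : ℕ) : ℕ :=
  (s.sort (· ≤ ·)).reverse.getD m 0

theorem le_descSeq_iff {s : Multiset ℕ} {v : ℕ} (hv : 0 < v) (m : ℕ) :
    v ≤ descSeq s m ↔ m < s.countP (v ≤ ·) := by
  have hsorted : (s.sort (· ≤ ·)).reverse.Pairwise (· ≥ ·) :=
    List.pairwise_reverse.2 (Multiset.pairwise_sort _ _)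
  rw [descSeq, le_getD_iff_lt_countP hsorted hv, List.countP_reverse, ← Multiset.coe_countP,
    Multiset.sort_eq]

theorem descSeq_le_of_countP_eq {s t : Multiset ℕ} {w i : ℕ}
    (heq : ∀ v, w < v → s.countP (v ≤ ·) = t.countP (v ≤ ·)) (hi : w ≤ descSeq t i) :
    descSeq s i ≤ descSeq t i := by
  by_contra! h
  have hpos : 0 < descSeq s i := by omega
  have hs := (le_descSeq_iff hpos i).1 le_rfl
  rw [heq _ (by omega)] at hs
  exact h.not_ge ((le_descSeq_iff hpos i).2 hs)

theorem toLex_descSeq_lt {s t : Multiset ℕ} {w : ℕ} (hw : 0 < w)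
    (hlt : t.countP (w ≤ ·) < s.countP (w ≤ ·))
    (heq : ∀ v, w < v → s.countP (v ≤ ·) = t.countP (v ≤ ·)) :
    toLex (descSeq t) < toLex (descSeq s) := by
  refine ⟨t.countP (w ≤ ·), fun i hi => ?_, ?_⟩
  · have ht : w ≤ descSeq t i := (le_descSeq_iff hw i).2 hi
    have hs : w ≤ descSeq s i := (le_descSeq_iff hw i).2 (hi.trans hlt)
    exact le_antisymm (descSeq_le_of_countP_eq (fun v hv => (heq v hv).symm) hs)
      (descSeq_le_of_countP_eq heq ht)
  · have hs : w ≤ descSeq s _ := (le_descSeq_iff hw _).2 hlt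
    have ht : ¬ w ≤ descSeq t _ := fun h => ((le_descSeq_iff hw _).1 h).false
    show descSeq t _ < descSeq s _
    omega

section WeightProfile

variable {α : Type*} (f : α → ℕ)

theorem countP_map_le_eq_card_filter (S : Finset α) (v : ℕ) :
    (S.val.map f).countP (v ≤ ·) = (S.filter (v ≤ f ·)).card := by
  rw [Multiset.countP_map]
  rfl

variable {f}

-- Positivity matters: `descSeq` pads with zeros, so it cannot see elements of weight `0`.
theorem toLex_descSeq_lt_of_filter_step {S T : Finset α} (hS : ∀ e ∈ S, 0 < f e)
    (hT : ∀ e ∈ T, 0 < f e)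
    (hstep : ∀ w, T.filter (w + 1 ≤ f ·) = S.filter (w + 1 ≤ f ·) →
      T.filter (w ≤ f ·) ⊆ S.filter (w ≤ f ·))
    (hne : T ≠ S) : toLex (descSeq (T.val.map f)) < toLex (descSeq (S.val.map f)) := by
  set D : ℕ → Prop := fun w => T.filter (w ≤ f ·) ≠ S.filter (w ≤ f ·)
  set N := (S ∪ T).sup f + 1
  have hbound : ∀ v, N ≤ v → ¬ D v := by
    intro v hv
    have hempty : ∀ X ⊆ S ∪ T, X.filter (v ≤ f ·) = ∅ := fun X hX =>
      filter_eq_empty_iff.2 fun e he => ((le_sup (hX he)).trans_lt hv).not_ge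
    simp only [D, not_not, hempty T subset_union_right, hempty S subset_union_left]
  set w := Nat.findGreatest D N
  have hw : D w := Nat.findGreatest_spec (P := D) (Nat.zero_le N) (by simpa [D] using hne)
  have habove : ∀ v, w < v → T.filter (v ≤ f ·) = S.filter (v ≤ f ·) := fun v hv => by
    by_contra h
    rcases le_or_gt v N with hvN | hvN
    · exact Nat.findGreatest_is_greatest hv hvN h
    · exact hbound v hvN.le h
  have hw_pos : 0 < w := by
    refine Nat.pos_of_ne_zero fun h0 => hne ?_
    have h1 := habove 1 (by omega)
    rwa [filter_true_of_mem (p := (1 ≤ f ·)) hT, filter_true_of_mem (p := (1 ≤ f ·)) hS] at h1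
  have hssub : T.filter (w ≤ f ·) ⊂ S.filter (w ≤ f ·) :=
    ssubset_of_subset_of_ne (hstep w (habove _ (by omega))) hw
  refine toLex_descSeq_lt hw_pos ?_ fun v hv => ?_
  · simpa only [countP_map_le_eq_card_filter] using card_lt_card hssub
  · simp only [countP_map_le_eq_card_filter, habove v hv]

end WeightProfile

def pairLength {n : ℕ} (p : Fin n × Fin n) : ℕ := p.2 - p.1

theorem lenSeq_eq_descSeq {n : ℕ} (S : Finset (Fin n × Fin n)) :
    lenSeq S = descSeq (S.val.map pairLength) := rfl

theorem pairLength_lt {n : ℕ} (p : Fin n × Fin n) : pairLength p < n := by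
  have := p.2.isLt
  unfold pairLength
  omega

theorem pairLength_pos {n : ℕ} {p : Fin n × Fin n} (hp : p ∈ PosUpper n) : 0 < pairLength p :=
  Nat.sub_pos_of_lt hp

theorem eq_of_pairLength_eq {n : ℕ} {p q : Fin n × Fin n} (hp : p ∈ PosUpper n)
    (hq : q ∈ PosUpper n) (hlen : pairLength p = pairLength q) (h : p.1 = q.1 ∨ p.2 = q.2) :
    p = q := by
  have hp' : (p.1 : ℕ) < p.2 := hp
  have hq' : (q.1 : ℕ) < q.2 := hq
  unfold pairLength at hlen
  rcases h with h | h
  · exact Prod.ext h (Fin.ext (by rw [h] at hp' hlen; omega))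
  · exact Prod.ext (Fin.ext (by rw [h] at hp' hlen; omega)) h

section Greedy

variable {n : ℕ} (C : Set (Fin n × Fin n))

def IsGreedyChoice (e : Fin n × Fin n) : Prop :=
  e ∈ C ∧
    ∀ f, pairLength e < pairLength f → IsGreedyChoice f → e.1 ≠ f.1 ∧ e.2 ≠ f.2
termination_by n - pairLength e
decreasing_by have := pairLength_lt f; omega

noncomputable def greedy : Finset (Fin n × Fin n) := univ.filter (IsGreedyChoice C)

variable {C}

theorem mem_greedy {e : Fin n × Fin n} :
    e ∈ greedy C ↔ e ∈ C ∧
      ∀ f ∈ greedy C, pairLength e < pairLength f → e.1 ≠ f.1 ∧ e.2 ≠ f.2 := by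
  simp only [greedy, mem_filter, mem_univ, true_and]
  rw [IsGreedyChoice]
  exact and_congr_right fun _ => forall_congr' fun _ => forall_comm

theorem greedy_subset : ↑(greedy C) ⊆ C := fun _ he => (mem_greedy.1 he).1

theorem indep_greedy (hC : C ⊆ PosUpper n) : Indep (greedy C) := by
  intro p hp q hq hne
  rcases lt_trichotomy (pairLength p) (pairLength q) with hlt | heq | hgt
  · exact (mem_greedy.1 hp).2 q hq hlt
  · have hshared := fun h =>
      hne (eq_of_pairLength_eq (hC (greedy_subset hp)) (hC (greedy_subset hq)) heq h)
    exact ⟨fun h => hshared (Or.inl h), fun h => hshared (Or.inr h)⟩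
  · exact ((mem_greedy.1 hq).2 p hp hgt).imp Ne.symm Ne.symm

theorem filter_subset_greedy {T : Finset (Fin n × Fin n)} (hTC : ↑T ⊆ C) (hT : Indep T)
    {w : ℕ}
    (habove : T.filter (w + 1 ≤ pairLength ·) = (greedy C).filter (w + 1 ≤ pairLength ·)) :
    T.filter (w ≤ pairLength ·) ⊆ (greedy C).filter (w ≤ pairLength ·) := by
  intro e he
  obtain ⟨heT, hw⟩ := mem_filter.1 he
  refine mem_filter.2 ⟨?_, hw⟩
  rcases hw.eq_or_lt with hw | hw
  · refine mem_greedy.2 ⟨hTC heT, fun f hf hlt => hT e heT f ?_ ?_⟩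
    · have : f ∈ (greedy C).filter (w + 1 ≤ pairLength ·) := mem_filter.2 ⟨hf, by omega⟩
      exact (mem_filter.1 (habove ▸ this)).1
    · rintro rfl; exact hlt.false
  · exact (mem_filter.1 (habove ▸ mem_filter.2 ⟨heT, hw⟩)).1

theorem toLex_lenSeq_lt_greedy (hC : C ⊆ PosUpper n) {T : Finset (Fin n × Fin n)}
    (hTC : ↑T ⊆ C) (hT : Indep T) (hne : T ≠ greedy C) :
    toLex (lenSeq T) < toLex (lenSeq (greedy C)) := by
  rw [lenSeq_eq_descSeq, lenSeq_eq_descSeq]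
  exact toLex_descSeq_lt_of_filter_step (fun e he => pairLength_pos (hC (greedy_subset he)))
    (fun e he => pairLength_pos (hC (hTC he))) (fun _ => filter_subset_greedy hTC hT) hne

end Greedy

theorem lexGe_iff_toLex_le {f g : ℕ → ℕ} : lexGe f g ↔ toLex g ≤ toLex f := by
  rw [le_iff_lt_or_eq, or_comm, lexGe]
  refine or_congr ⟨fun h => congrArg toLex h.symm, fun h => (toLex.injective h).symm⟩ ?_
  exact exists_congr fun m => and_congr_left' (forall₂_congr fun i _ => eq_comm)

/-- Every poset on `[n]` has a unique highest cover set. -/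
theorem highest_cover_set_unique {n : ℕ} (P : Set (Fin n × Fin n)) (hP : IsPoset P) :
    ∃! S : Finset (Fin n × Fin n), IsHighestCoverSet P S := by
  have hC : covers P ⊆ PosUpper n := fun e he => hP.1 he.1
  have hG : IsHighestCoverSet P (greedy (covers P)) := by
    refine ⟨greedy_subset, indep_greedy hC, fun T hTC hT => lexGe_iff_toLex_le.2 ?_⟩
    rcases eq_or_ne T (greedy (covers P)) with rfl | hne
    · exact le_rfl
    · exact (toLex_lenSeq_lt_greedy hC hTC hT hne).le
  refine ⟨_, hG, fun S hS => by_contra fun hne => ?_⟩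
  exact (toLex_lenSeq_lt_greedy hC hS.1 hS.2.1 hne).not_ge
    (lexGe_iff_toLex_le.1 (hS.2.2 _ hG.1 hG.2.1))
end
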